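/- arXiv:1603.03800 — 9 statements merged into one kernel-verified Lean document; each statement's English description precedes it below -/
import Mathlib

section
/- Let V be a finite-dimensional vector space over a field, and let φ, ψ : Grass(V) → ℝ be functions on the set of vector subspaces of V such that: φ ≥ 0 and φ(0) = 0; φ and ψ are non-decreasing for inclusion; φ is submodular (φ(U+W) + φ(U∩W) ≤ φ(U) + φ(W)) and ψ is supermodular (ψ(U+W) + ψ(U∩W) ≥ ψ(U) + ψ(W)). Define q(x) = ψ(x)/φ(x) with the convention q(x) = 0 if ψ(x) = 0, and q(x) = sign(ψ(x))·∞ if φ(x) = 0 but ψ(x) ≠ 0. Then the supremum S = sup over subspaces x of q(x) is attained, and there is a unique subspace x₀ of maximal dimension with q(x₀) = S. -/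
/-!
For `c ≥ 0` the function `ψ - c φ` is supermodular, and the zero set of a nonpositive supermodular
function is closed under `⊔`. This makes the set of maximizers of `q` closed under `⊔` whenever the
maximum is `⊤` (take `c = ∞`, i.e. the function `-φ`) or a positive real `r` (take `c = r`); in a
lattice of finite height such a set has a greatest element. If `ψ ≤ 0` everywhere, `q` is monotone
and `⊤` is that element.

That a positive maximum of `ψ / φ` is attained is shown by well-founded induction: if `u` does not
maximize the ratio below itself, let `y` be maximal among the `x ≤ u` with `ψ x > c φ x`, where
`c = ψ u / φ u`. A maximizer `z` below `y < u` is then a maximizer below `u`: an `x ≤ u` with a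
larger ratio would, by supermodularity of `ψ - c φ`, push `y ⊔ x > y` into the same family.
-/

noncomputable def extRatio (a b : ℝ) : EReal :=
  if a = 0 then 0 else if b = 0 then (if 0 < a then ⊤ else ⊥) else ((a / b : ℝ) : EReal)

section extRatio

variable {a a' b b' r : ℝ}

theorem extRatio_of_pos (a : ℝ) (hb : 0 < b) : extRatio a b = ((a / b : ℝ) : EReal) := by
  by_cases ha : a = 0 <;> simp [extRatio, ha, hb.ne']

theorem extRatio_zero_right_of_neg (ha : a < 0) : extRatio a 0 = ⊥ := by
  simp [extRatio, ha.ne, ha.not_gt]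

theorem extRatio_nonpos (hb : 0 ≤ b) (ha : a ≤ 0) : extRatio a b ≤ 0 := by
  rcases hb.eq_or_lt with rfl | hb
  · rcases ha.eq_or_lt with rfl | ha
    · simp [extRatio]
    · simp [extRatio_zero_right_of_neg ha]
  · rw [extRatio_of_pos a hb]
    exact_mod_cast div_nonpos_of_nonpos_of_nonneg ha hb.le

theorem extRatio_le_coe (hb : 0 ≤ b) (hr : 0 ≤ r) (h : a ≤ r * b) : extRatio a b ≤ r := by
  rcases hb.eq_or_lt with rfl | hb
  · exact (extRatio_nonpos le_rfl (by simpa using h)).trans (mod_cast hr)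
  · rw [extRatio_of_pos a hb]
    exact_mod_cast (div_le_iff₀ hb).2 h

theorem extRatio_eq_top_iff : extRatio a b = ⊤ ↔ b = 0 ∧ 0 < a := by
  unfold extRatio
  split_ifs <;> simp_all

theorem extRatio_eq_coe_iff (hb : 0 ≤ b) (hr : 0 < r) :
    extRatio a b = r ↔ a = r * b ∧ 0 < a := by
  rcases hb.eq_or_lt with rfl | hb
  · unfold extRatio
    split_ifs <;> simp_all [hr.ne', eq_comm (a := (0 : EReal))]
  · rw [extRatio_of_pos a hb, EReal.coe_eq_coe_iff, div_eq_iff hb.ne']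
    exact ⟨fun h => ⟨h, h ▸ mul_pos hr hb⟩, And.left⟩

theorem extRatio_le_extRatio_of_nonpos (hb : 0 ≤ b) (hbb' : b ≤ b') (haa' : a ≤ a')
    (ha' : a' ≤ 0) : extRatio a b ≤ extRatio a' b' := by
  rcases ha'.eq_or_lt with rfl | ha'
  · simpa [extRatio] using extRatio_nonpos hb haa'
  rcases hb.eq_or_lt with rfl | hb
  · simp [extRatio_zero_right_of_neg (haa'.trans_lt ha')]
  have hb' : 0 < b' := hb.trans_le hbb'
  rw [extRatio_of_pos a hb, extRatio_of_pos a' hb', EReal.coe_le_coe_iff,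
    div_le_div_iff₀ hb hb']
  nlinarith

end extRatio

theorem setOf_forall_apply_le_eq {ι β : Type*} [PartialOrder β] {f : ι → β} {s : β} {i₀ : ι}
    (hs : ∀ i, f i ≤ s) (h₀ : f i₀ = s) : {i | ∀ j, f j ≤ f i} = {i | f i = s} :=
  Set.ext fun i => ⟨fun h => (hs i).antisymm (h₀ ▸ h i₀), fun h j => h ▸ hs j⟩

theorem IsGreatest.existsUnique_of_strictMono {α β : Type*} [PartialOrder α] [Preorder β]
    {f : α → β} (hf : StrictMono f) {s : Set α} {x₀ : α} (h : IsGreatest s x₀) :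
    ∃! x, x ∈ s ∧ ∀ y ∈ s, f y ≤ f x :=
  ⟨x₀, ⟨h.1, fun _ hy => hf.monotone (h.2 hy)⟩, fun _ ⟨hx, hxmax⟩ =>
    (h.2 hx).eq_of_not_lt fun hlt => (hf hlt).not_ge (hxmax x₀ h.1)⟩

section Lattice

variable {α : Type*} [Lattice α]

theorem SupClosed.exists_isGreatest [WellFoundedGT α] {s : Set α} (hs : SupClosed s)
    (hne : s.Nonempty) : ∃ x, IsGreatest s x := by
  obtain ⟨x, hx⟩ := exists_maximal_of_wellFoundedGT (· ∈ s) hne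
  exact ⟨x, hx.prop, fun y hy => le_sup_right.trans (hx.le_of_ge (hs hx.prop hy) le_sup_left)⟩

theorem supClosed_setOf_eq_of_supermodular {g : α → ℝ} {m : ℝ}
    (hg : ∀ a b, g a + g b ≤ g (a ⊔ b) + g (a ⊓ b)) (hm : ∀ x, g x ≤ m) :
    SupClosed {x | g x = m} := by
  intro a (ha : g a = m) b (hb : g b = m)
  show g (a ⊔ b) = m
  linarith [hg a b, hm (a ⊔ b), hm (a ⊓ b)]

variable {φ ψ : α → ℝ}

theorem supermodular_sub_mul (hφ_sub : ∀ U W, φ (U ⊔ W) + φ (U ⊓ W) ≤ φ U + φ W)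
    (hψ_super : ∀ U W, ψ U + ψ W ≤ ψ (U ⊔ W) + ψ (U ⊓ W)) {c : ℝ} (hc : 0 ≤ c) (a b : α) :
    (ψ a - c * φ a) + (ψ b - c * φ b) ≤
      (ψ (a ⊔ b) - c * φ (a ⊔ b)) + (ψ (a ⊓ b) - c * φ (a ⊓ b)) := by
  nlinarith [hψ_super a b, mul_le_mul_of_nonneg_left (hφ_sub a b) hc]

theorem exists_isGreatest_setOf_eq_zero_and_pos [WellFoundedGT α] {g : α → ℝ}
    (hψ_mono : Monotone ψ) (hg : ∀ a b, g a + g b ≤ g (a ⊔ b) + g (a ⊓ b))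
    (hg_nonpos : ∀ x, g x ≤ 0) (hne : ∃ x, g x = 0 ∧ 0 < ψ x) :
    ∃ x₀, IsGreatest {x | g x = 0 ∧ 0 < ψ x} x₀ := by
  have hψ_pos : IsUpperSet {x | 0 < ψ x} :=
    isUpperSet_setOfPred.2 fun _ _ h (hx : 0 < ψ _) => hx.trans_le (hψ_mono h)
  exact ((supClosed_setOf_eq_of_supermodular hg hg_nonpos).inter hψ_pos.supClosed).exists_isGreatest
    hne

theorem mul_lt_apply_sup_of_ratio_lt (hφ_mono : Monotone φ)
    (hφ_sub : ∀ U W, φ (U ⊔ W) + φ (U ⊓ W) ≤ φ U + φ W)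
    (hψ_super : ∀ U W, ψ U + ψ W ≤ ψ (U ⊔ W) + ψ (U ⊓ W)) {c r : ℝ} {x y : α}
    (hc : 0 ≤ c) (hcr : c ≤ r) (hy : c * φ y < ψ y) (hx : r * φ x < ψ x)
    (hinf : ψ (y ⊓ x) ≤ r * φ (y ⊓ x)) : c * φ (y ⊔ x) < ψ (y ⊔ x) := by
  have hφ_inf : (r - c) * φ (y ⊓ x) ≤ (r - c) * φ x :=
    mul_le_mul_of_nonneg_left (hφ_mono inf_le_right) (sub_nonneg.2 hcr)
  nlinarith [supermodular_sub_mul hφ_sub hψ_super hc y x]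

theorem apply_le_div_mul_of_nonpos (hφ_mono : Monotone φ) (hψ_mono : Monotone ψ) {u x : α}
    (hu : 0 < φ u) (hψu : ψ u ≤ 0) (hx : x ≤ u) : ψ x ≤ ψ u / φ u * φ x :=
  calc ψ x ≤ ψ u := hψ_mono hx
    _ = ψ u / φ u * φ u := by field_simp
    _ ≤ ψ u / φ u * φ x :=
      mul_le_mul_of_nonpos_left (hφ_mono hx) (div_nonpos_of_nonpos_of_nonneg hψu hu.le)

theorem exists_le_ratio_maximizer [WellFoundedLT α] [WellFoundedGT α]
    (hφ_nonneg : ∀ x, 0 ≤ φ x) (hφ_mono : Monotone φ) (hψ_mono : Monotone ψ)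
    (hφ_sub : ∀ U W, φ (U ⊔ W) + φ (U ⊓ W) ≤ φ U + φ W)
    (hψ_super : ∀ U W, ψ U + ψ W ≤ ψ (U ⊔ W) + ψ (U ⊓ W))
    (hφ_pos : ∀ x, 0 < ψ x → 0 < φ x) (u : α) (hu : 0 < φ u) :
    ∃ z ≤ u, 0 < φ z ∧ ∀ x ≤ u, ψ x ≤ ψ z / φ z * φ x := by
  induction u using WellFoundedLT.induction with
  | _ u ih =>
  by_cases hψu : ψ u ≤ 0
  · exact ⟨u, le_rfl, hu, fun x => apply_le_div_mul_of_nonpos hφ_mono hψ_mono hu hψu⟩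
  by_cases hmax : ∀ x ≤ u, ψ x ≤ ψ u / φ u * φ x
  · exact ⟨u, le_rfl, hu, hmax⟩
  push Not at hψu hmax
  set c := ψ u / φ u with hc_def
  have hc : 0 < c := div_pos hψu hu
  obtain ⟨y, hy_max⟩ := exists_maximal_of_wellFoundedGT (fun x => x ≤ u ∧ c * φ x < ψ x) hmax
  obtain ⟨hyu, hy⟩ := hy_max.prop
  have hyu' : y < u := hyu.lt_of_ne <| by
    rintro rfl
    simp [hc_def, div_mul_cancel₀ _ hu.ne'] at hy
  have hφy : 0 < φ y := hφ_pos y ((mul_nonneg hc.le (hφ_nonneg y)).trans_lt hy)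
  obtain ⟨z, hzy, hφz, hz⟩ := ih y hyu' hφy
  refine ⟨z, hzy.trans hyu, hφz, fun x hxu => ?_⟩
  by_contra! hx
  have hcr : c ≤ ψ z / φ z := le_of_mul_le_mul_right (hy.le.trans (hz y le_rfl)) hφy
  have hsup : c * φ (y ⊔ x) < ψ (y ⊔ x) :=
    mul_lt_apply_sup_of_ratio_lt hφ_mono hφ_sub hψ_super hc.le hcr hy hx (hz _ inf_le_left)
  have hxy : x ≤ y :=
    le_sup_right.trans (hy_max.le_of_ge ⟨sup_le hyu hxu, hsup⟩ le_sup_left)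
  exact hx.not_ge (hz x hxy)

theorem exists_isGreatest_setOf_extRatio_le_of_ratio_le [WellFoundedGT α]
    (hφ_nonneg : ∀ x, 0 ≤ φ x) (hψ_mono : Monotone ψ)
    (hφ_sub : ∀ U W, φ (U ⊔ W) + φ (U ⊓ W) ≤ φ U + φ W)
    (hψ_super : ∀ U W, ψ U + ψ W ≤ ψ (U ⊔ W) + ψ (U ⊓ W)) {r : ℝ} {z : α} (hr : 0 < r)
    (hφz : 0 < φ z) (hz : ψ z = r * φ z) (h : ∀ x, ψ x ≤ r * φ x) :
    ∃ x₀, IsGreatest {x | ∀ y, extRatio (ψ y) (φ y) ≤ extRatio (ψ x) (φ x)} x₀ := by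
  have hψz : 0 < ψ z := hz ▸ mul_pos hr hφz
  rw [setOf_forall_apply_le_eq (f := fun x => extRatio (ψ x) (φ x))
    (fun y => extRatio_le_coe (hφ_nonneg y) hr.le (h y))
    ((extRatio_eq_coe_iff (hφ_nonneg z) hr).2 ⟨hz, hψz⟩)]
  simpa only [extRatio_eq_coe_iff (hφ_nonneg _) hr, ← sub_eq_zero (a := ψ _)] using
    exists_isGreatest_setOf_eq_zero_and_pos hψ_mono (supermodular_sub_mul hφ_sub hψ_super hr.le)
      (fun x => sub_nonpos.2 (h x)) ⟨z, sub_eq_zero.2 hz, hψz⟩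

theorem exists_isGreatest_setOf_extRatio_le [OrderTop α] [WellFoundedLT α] [WellFoundedGT α]
    (hφ_nonneg : ∀ x, 0 ≤ φ x) (hφ_mono : Monotone φ) (hψ_mono : Monotone ψ)
    (hφ_sub : ∀ U W, φ (U ⊔ W) + φ (U ⊓ W) ≤ φ U + φ W)
    (hψ_super : ∀ U W, ψ U + ψ W ≤ ψ (U ⊔ W) + ψ (U ⊓ W)) :
    ∃ x₀, IsGreatest {x | ∀ y, extRatio (ψ y) (φ y) ≤ extRatio (ψ x) (φ x)} x₀ := by
  by_cases hinf : ∃ w, φ w = 0 ∧ 0 < ψ w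
  · obtain ⟨w, hw⟩ := hinf
    rw [setOf_forall_apply_le_eq (f := fun x => extRatio (ψ x) (φ x)) (fun _ => le_top)
      (extRatio_eq_top_iff.2 hw)]
    simpa only [extRatio_eq_top_iff, ← neg_eq_zero (a := φ _)] using
      exists_isGreatest_setOf_eq_zero_and_pos hψ_mono (fun a b => by linarith [hφ_sub a b])
        (fun x => neg_nonpos.2 (hφ_nonneg x)) ⟨w, neg_eq_zero.2 hw.1, hw.2⟩
  by_cases hψ : ∀ x, ψ x ≤ 0
  · exact ⟨⊤, fun y => extRatio_le_extRatio_of_nonpos (hφ_nonneg y) (hφ_mono le_top)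
      (hψ_mono le_top) (hψ ⊤), fun _ _ => le_top⟩
  push Not at hinf hψ
  obtain ⟨w, hw⟩ := hψ
  have hφ_pos : ∀ x, 0 < ψ x → 0 < φ x := fun x hx =>
    (hφ_nonneg x).lt_of_ne fun h => (hinf x h.symm).not_gt hx
  obtain ⟨z, -, hφz, hz⟩ := exists_le_ratio_maximizer hφ_nonneg hφ_mono hψ_mono hφ_sub hψ_super
    hφ_pos ⊤ ((hφ_pos w hw).trans_le (hφ_mono le_top))
  exact exists_isGreatest_setOf_extRatio_le_of_ratio_le hφ_nonneg hψ_mono hφ_sub hψ_super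
    (pos_of_mul_pos_left (hw.trans_le (hz w le_top)) (hφ_nonneg w)) hφz
    (div_mul_cancel₀ _ hφz.ne').symm fun x => hz x le_top

end Lattice

theorem submodularity_lemma_general
    {K V : Type*} [Field K] [AddCommGroup V] [Module K V] [FiniteDimensional K V]
    (φ ψ : Submodule K V → ℝ)
    (hφ_nonneg : ∀ W, 0 ≤ φ W)
    (hφ_mono : ∀ U W : Submodule K V, U ≤ W → φ U ≤ φ W)
    (hψ_mono : ∀ U W : Submodule K V, U ≤ W → ψ U ≤ ψ W)
    (hφ_sub : ∀ U W : Submodule K V, φ (U ⊔ W) + φ (U ⊓ W) ≤ φ U + φ W)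
    (hψ_super : ∀ U W : Submodule K V, ψ U + ψ W ≤ ψ (U ⊔ W) + ψ (U ⊓ W))
    (q : Submodule K V → EReal)
    (hq : ∀ W, q W = if ψ W = 0 then 0
      else if φ W = 0 then (if 0 < ψ W then (⊤ : EReal) else (⊥ : EReal))
      else ((ψ W / φ W : ℝ) : EReal)) :
    ∃! x₀ : Submodule K V,
      (∀ x, q x ≤ q x₀) ∧
      (∀ x, (∀ y, q y ≤ q x) → Module.finrank K x ≤ Module.finrank K x₀) := by
  obtain rfl : q = fun W => extRatio (ψ W) (φ W) := funext hq
  obtain ⟨x₀, hx₀⟩ := exists_isGreatest_setOf_extRatio_le hφ_nonneg (fun _ _ => hφ_mono _ _)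
    (fun _ _ => hψ_mono _ _) hφ_sub hψ_super
  exact hx₀.existsUnique_of_strictMono Submodule.finrank_strictMono

/-- The submodularity lemma: if `φ ≥ 0`, `φ ⊥ = 0`, `φ` and `ψ` are non-decreasing for
inclusion, `φ` is submodular and `ψ` is supermodular on the lattice of subspaces of a
finite-dimensional vector space `V`, then the supremum of `q = ψ/φ` (with the stated
conventions) is attained, and there is a unique subspace of maximal dimension attaining it. -/
theorem submodularity_lemma
    {K V : Type*} [Field K] [AddCommGroup V] [Module K V] [FiniteDimensional K V]
    (φ ψ : Submodule K V → ℝ)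
    (hφ_nonneg : ∀ W, 0 ≤ φ W) (hφ_bot : φ ⊥ = 0)
    (hφ_mono : ∀ U W : Submodule K V, U ≤ W → φ U ≤ φ W)
    (hψ_mono : ∀ U W : Submodule K V, U ≤ W → ψ U ≤ ψ W)
    (hφ_sub : ∀ U W : Submodule K V, φ (U ⊔ W) + φ (U ⊓ W) ≤ φ U + φ W)
    (hψ_super : ∀ U W : Submodule K V, ψ U + ψ W ≤ ψ (U ⊔ W) + ψ (U ⊓ W))
    (q : Submodule K V → EReal)
    (hq : ∀ W, q W = if ψ W = 0 then 0
      else if φ W = 0 then (if 0 < ψ W then (⊤ : EReal) else (⊥ : EReal))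
      else ((ψ W / φ W : ℝ) : EReal)) :
    ∃! x₀ : Submodule K V,
      (∀ x, q x ≤ q x₀) ∧
      (∀ x, (∀ y, q y ≤ q x) → Module.finrank K x ≤ Module.finrank K x₀) :=
  submodularity_lemma_general φ ψ hφ_nonneg hφ_mono hψ_mono hφ_sub hψ_super q hq
end

section
/- Let V be a finite-dimensional vector space, G a group acting on V by linear automorphisms (hence acting on the lattice of subspaces preserving dimension), and let φ, ψ : Grass(V) → ℝ be G-invariant functions with φ ≥ 0, φ(0)=0, both non-decreasing for inclusion, φ submodular and ψ supermodular. Then the supremum of ψ(x)/φ(x) over subspaces x (with the conventions as in the submodularity lemma) is attained at a G-invariant subspace. -/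
/-!
For `c > 0`, `c ≤ q x` means `0 < ψ x` and `c φ x ≤ ψ x`. If `ψ ≤ c φ` everywhere, then `ψ - c φ`
is a nonpositive supermodular function, so the subspaces where it vanishes are closed under `⊔`;
for `c = sup q` these are the maximizers of `q`. Since `G` permutes the maximizers and preserves
dimension, the largest maximizer is `G`-invariant. In the degenerate cases either `q = ⊤`
somewhere, and the subspaces with `φ = 0 < ψ` are again closed under `⊔`, or `ψ ⊤ ≤ 0`, and `⊤`
itself is a maximizer.

That `sup q` is finite and attained comes from a dimension argument: if `F` is superadditive
along `⊔` on a `⊔`-closed family with supremum `0`, let `k` be the largest dimension of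
near-maximizers available at every precision; joining such a near-maximizer `x` with a better
one `y` of dimension `k` stays near-maximal, which forces `x ⊔ y = x = y`, so `F x` cannot be
negative. Applied to `-φ` this keeps `φ` away from `0` where `ψ > 0`, and applied to `ψ - S φ`
it shows that `S = sup q` is attained.
-/

open Module

noncomputable def extendedRatio (a b : ℝ) : EReal :=
  if a = 0 then 0 else if b = 0 then (if 0 < a then ⊤ else ⊥) else ((a / b : ℝ) : EReal)

section extendedRatio

variable {a a' b b' c : ℝ}

theorem top_le_extendedRatio_iff : ⊤ ≤ extendedRatio a b ↔ 0 < a ∧ b = 0 := by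
  unfold extendedRatio
  split_ifs <;> simp_all [EReal.coe_ne_top]

theorem coe_le_extendedRatio_iff (hc : 0 < c) (hb : 0 ≤ b) :
    (c : EReal) ≤ extendedRatio a b ↔ 0 < a ∧ c * b ≤ a := by
  unfold extendedRatio
  split_ifs with ha hb0 ha'
  · simp [ha, hc]
  · simp [hb0, ha', ha'.le]
  · simp [hb0, ha', EReal.coe_ne_bot]
  · rw [EReal.coe_le_coe_iff, le_div_iff₀ (hb.lt_of_ne' hb0)]
    exact ⟨fun h => ⟨lt_of_lt_of_le (by positivity) h, h⟩, And.right⟩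

theorem extendedRatio_le_coe (hc : 0 ≤ c) (hb : 0 ≤ b) (h : a ≤ c * b) :
    extendedRatio a b ≤ c := by
  unfold extendedRatio
  split_ifs with ha hb0 ha'
  · exact EReal.coe_nonneg.2 hc
  · simp only [hb0, mul_zero] at h
    linarith
  · exact bot_le
  · exact EReal.coe_le_coe_iff.2 ((div_le_iff₀ (hb.lt_of_ne' hb0)).2 h)

theorem extendedRatio_le_extendedRatio (ha' : a' ≤ 0) (ha : a ≤ a') (hb : 0 ≤ b) (hbb : b ≤ b') :
    extendedRatio a b ≤ extendedRatio a' b' := by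
  rcases ha'.eq_or_lt with rfl | ha'_neg
  · simpa [extendedRatio] using extendedRatio_le_coe le_rfl hb (by simpa using ha)
  have ha_neg := ha.trans_lt ha'_neg
  rcases hb.eq_or_lt with rfl | hb_pos
  · simp [extendedRatio, ha_neg.ne, ha_neg.not_gt]
  have hb'_pos := hb_pos.trans_le hbb
  simp only [extendedRatio, ha_neg.ne, ha'_neg.ne, hb_pos.ne', hb'_pos.ne', if_false]
  rw [EReal.coe_le_coe_iff, div_le_div_iff₀ hb_pos hb'_pos]
  nlinarith

end extendedRatio

section Lattice

theorem exists_isGreatest_setOf_forall_le {α β : Type*} [CompleteLattice α] [WellFoundedGT α]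
    [Preorder β] {r : α → β} {c : β} (hr : ∀ x, r x ≤ c) (hne : ∃ x, c ≤ r x)
    (hC : SupClosed {x | c ≤ r x}) : ∃ x₀, IsGreatest {x | ∀ y, r y ≤ r x} x₀ := by
  obtain ⟨x, hx⟩ := hne
  have hmem : sSup {x | c ≤ r x} ∈ {x | c ≤ r x} :=
    CompleteLattice.IsSupFiniteCompact.isSupClosedCompact α
      (CompleteLattice.WellFoundedGT.isSupFiniteCompact α) _ ⟨x, hx⟩ hC
  exact ⟨_, fun y => (hr y).trans hmem, fun y hy => le_sSup (hx.trans (hy x))⟩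

variable {α : Type*} [Lattice α] {φ ψ : α → ℝ}

theorem supClosed_setOf_pos_and_eq_zero (hφ_nonneg : ∀ x, 0 ≤ φ x)
    (hφ_sub : ∀ x y, φ (x ⊔ y) + φ (x ⊓ y) ≤ φ x + φ y) (hψ_mono : Monotone ψ) :
    SupClosed {x | 0 < ψ x ∧ φ x = 0} := by
  rintro x ⟨hψx, hφx⟩ y ⟨-, hφy⟩
  refine ⟨hψx.trans_le (hψ_mono le_sup_left), ?_⟩
  linarith [hφ_sub x y, hφ_nonneg (x ⊓ y), hφ_nonneg (x ⊔ y)]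

theorem supClosed_setOf_pos_and_mul_le {S : ℝ} (hS : 0 ≤ S) (hle : ∀ x, ψ x ≤ S * φ x)
    (hφ_sub : ∀ x y, φ (x ⊔ y) + φ (x ⊓ y) ≤ φ x + φ y)
    (hψ_super : ∀ x y, ψ x + ψ y ≤ ψ (x ⊔ y) + ψ (x ⊓ y)) (hψ_mono : Monotone ψ) :
    SupClosed {x | 0 < ψ x ∧ S * φ x ≤ ψ x} := by
  rintro x ⟨hψx, hx⟩ y ⟨-, hy⟩
  refine ⟨hψx.trans_le (hψ_mono le_sup_left), ?_⟩
  nlinarith [hψ_super x y, mul_le_mul_of_nonneg_left (hφ_sub x y) hS, hle (x ⊓ y)]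

end Lattice

section Submodule

variable {K V : Type*} [DivisionRing K] [AddCommGroup V] [Module K V] [FiniteDimensional K V]

theorem SupClosed.exists_nonneg_of_superadditive {B : Set (Submodule K V)} (hB : SupClosed B)
    {F : Submodule K V → ℝ} (hF : ∀ x ∈ B, ∀ y ∈ B, F x + F y ≤ F (x ⊔ y))
    (hsup : ∀ ε > 0, ∃ x ∈ B, -ε ≤ F x) : ∃ x ∈ B, 0 ≤ F x := by
  classical
  by_contra! hneg
  let P : ℕ → Prop := fun k => ∀ ε > 0, ∃ x ∈ B, -ε ≤ F x ∧ k ≤ finrank K x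
  set k := Nat.findGreatest P (finrank K V)
  have hk : P k := Nat.findGreatest_spec (Nat.zero_le _) fun ε hε =>
    (hsup ε hε).imp fun x hx => ⟨hx.1, hx.2, Nat.zero_le _⟩
  have hk_succ : ¬P (k + 1) := by
    intro h
    by_cases hle : k + 1 ≤ finrank K V
    · exact Nat.findGreatest_is_greatest (Nat.lt_succ_self k) hle h
    · obtain ⟨x, -, -, hx⟩ := h 1 one_pos
      exact hle (hx.trans (Submodule.finrank_le x))
  obtain ⟨ε, hε, hdim⟩ : ∃ ε > 0, ∀ x ∈ B, -ε ≤ F x → finrank K x ≤ k := by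
    simpa [P, Nat.lt_succ_iff] using hk_succ
  obtain ⟨x, hxB, hxF, hxk⟩ := hk (ε / 2) (by positivity)
  have hFx := hneg x hxB
  obtain ⟨y, hyB, hyF, hyk⟩ := hk (min (ε / 2) (-F x / 2)) (lt_min (by positivity) (by linarith))
  have hyF₁ := hyF.trans' (neg_le_neg (min_le_left _ _))
  have hyF₂ := hyF.trans' (neg_le_neg (min_le_right _ _))
  have hsup_eq : x ⊔ y = x := (Submodule.eq_of_le_of_finrank_le le_sup_left
    ((hdim _ (hB hxB hyB) (by linarith [hF x hxB y hyB])).trans hxk)).symm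
  have hyx : y = x := Submodule.eq_of_le_of_finrank_le (hsup_eq ▸ le_sup_right)
    ((hdim x hxB (by linarith)).trans hyk)
  subst hyx
  linarith

theorem SupClosed.exists_pos_le_of_subadditive {B : Set (Submodule K V)} (hB : SupClosed B)
    {φ : Submodule K V → ℝ} (hφ : ∀ x ∈ B, ∀ y ∈ B, φ (x ⊔ y) ≤ φ x + φ y)
    (hpos : ∀ x ∈ B, 0 < φ x) : ∃ δ > 0, ∀ x ∈ B, δ ≤ φ x := by
  by_contra! h
  obtain ⟨x, hxB, hx⟩ := hB.exists_nonneg_of_superadditive (F := fun x => -φ x)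
    (fun x hx y hy => by linarith [hφ x hx y hy])
    (fun ε hε => (h ε hε).imp fun x hx => ⟨hx.1, by linarith [hx.2]⟩)
  linarith [hpos x hxB]

theorem Submodule.map_eq_of_isGreatest {C : Set (Submodule K V)} {x₀ : Submodule K V}
    (h : IsGreatest C x₀) (e : V ≃ₗ[K] V) (he : ∀ x ∈ C, x.map (e : V →ₗ[K] V) ∈ C) :
    x₀.map (e : V →ₗ[K] V) = x₀ :=
  Submodule.eq_of_le_of_finrank_le (h.2 (he x₀ h.1)) (LinearEquiv.finrank_map_eq e x₀).ge

variable {φ ψ : Submodule K V → ℝ}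

theorem exists_max_ratio (hφ_nonneg : ∀ x, 0 ≤ φ x) (hφ_mono : Monotone φ)
    (hψ_mono : Monotone ψ) (hφ_sub : ∀ x y, φ (x ⊔ y) + φ (x ⊓ y) ≤ φ x + φ y)
    (hψ_super : ∀ x y, ψ x + ψ y ≤ ψ (x ⊔ y) + ψ (x ⊓ y))
    (hpos : ∀ x, 0 < ψ x → 0 < φ x) (htop : 0 < ψ ⊤) :
    ∃ S > 0, (∀ x, ψ x ≤ S * φ x) ∧ ∃ x, 0 < ψ x ∧ S * φ x ≤ ψ x := by
  set B := {x : Submodule K V | 0 < ψ x}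
  have hB : SupClosed B := fun x hx y _ => hx.trans_le (hψ_mono le_sup_left)
  obtain ⟨δ, hδ, hδle⟩ := hB.exists_pos_le_of_subadditive
    (fun x _ y _ => by linarith [hφ_sub x y, hφ_nonneg (x ⊓ y)]) hpos
  have hφtop : 0 < φ ⊤ := hpos ⊤ htop
  have hbdd : BddAbove ((fun x => ψ x / φ x) '' B) := ⟨ψ ⊤ / δ, by
    rintro _ ⟨x, hx, rfl⟩
    exact div_le_div₀ htop.le (hψ_mono le_top) hδ (hδle x hx)⟩
  set S := sSup ((fun x => ψ x / φ x) '' B)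
  have hS_ub : ∀ x ∈ B, ψ x / φ x ≤ S := fun x hx => le_csSup hbdd ⟨x, hx, rfl⟩
  have hS : 0 < S := (div_pos htop hφtop).trans_le (hS_ub ⊤ htop)
  have hle : ∀ x, ψ x ≤ S * φ x := by
    intro x
    rcases lt_or_ge 0 (ψ x) with hx | hx
    · exact (div_le_iff₀ (hpos x hx)).1 (hS_ub x hx)
    · exact hx.trans (mul_nonneg hS.le (hφ_nonneg x))
  have hnear : ∀ ε > 0, ∃ x ∈ B, -ε ≤ ψ x - S * φ x := by
    intro ε hε
    obtain ⟨_, ⟨x, hxB, rfl⟩, hx⟩ :=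
      exists_lt_of_lt_csSup (Set.Nonempty.image _ ⟨⊤, htop⟩) (sub_lt_self S (div_pos hε hφtop))
    have h₁ : (S - ε / φ ⊤) * φ x < ψ x := (lt_div_iff₀ (hpos x hxB)).1 hx
    have h₂ : ε / φ ⊤ * φ x ≤ ε := calc
      ε / φ ⊤ * φ x ≤ ε / φ ⊤ * φ ⊤ := by gcongr; exact hφ_mono le_top
      _ = ε := div_mul_cancel₀ ε hφtop.ne'
    exact ⟨x, hxB, by linarith⟩
  obtain ⟨x, hxB, hx⟩ := hB.exists_nonneg_of_superadditive (F := fun x => ψ x - S * φ x)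
    (fun x _ y _ => by nlinarith [hψ_super x y, hφ_sub x y, hle (x ⊓ y)]) hnear
  exact ⟨S, hS, hle, x, hxB, by linarith⟩

theorem exists_isGreatest_maximizers (hφ_nonneg : ∀ x, 0 ≤ φ x) (hφ_mono : Monotone φ)
    (hψ_mono : Monotone ψ) (hφ_sub : ∀ x y, φ (x ⊔ y) + φ (x ⊓ y) ≤ φ x + φ y)
    (hψ_super : ∀ x y, ψ x + ψ y ≤ ψ (x ⊔ y) + ψ (x ⊓ y)) :
    ∃ x₀, IsGreatest {x | ∀ y, extendedRatio (ψ y) (φ y) ≤ extendedRatio (ψ x) (φ x)} x₀ := by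
  by_cases hinf : ∃ x, 0 < ψ x ∧ φ x = 0
  · refine exists_isGreatest_setOf_forall_le (c := ⊤) (fun _ => le_top) ?_ ?_
    · simpa only [top_le_extendedRatio_iff] using hinf
    · simpa only [top_le_extendedRatio_iff] using
        supClosed_setOf_pos_and_eq_zero hφ_nonneg hφ_sub hψ_mono
  push Not at hinf
  have hpos : ∀ x, 0 < ψ x → 0 < φ x := fun x hx => (hφ_nonneg x).lt_of_ne' (hinf x hx)
  rcases le_or_gt (ψ ⊤) 0 with htop | htop
  · exact ⟨⊤, fun x => extendedRatio_le_extendedRatio htop (hψ_mono le_top) (hφ_nonneg x)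
      (hφ_mono le_top), fun _ _ => le_top⟩
  obtain ⟨S, hS, hle, hne⟩ := exists_max_ratio hφ_nonneg hφ_mono hψ_mono hφ_sub hψ_super hpos htop
  have hiff : ∀ x, (S : EReal) ≤ extendedRatio (ψ x) (φ x) ↔ 0 < ψ x ∧ S * φ x ≤ ψ x :=
    fun x => coe_le_extendedRatio_iff hS (hφ_nonneg x)
  refine exists_isGreatest_setOf_forall_le (c := (S : EReal))
    (fun x => extendedRatio_le_coe hS.le (hφ_nonneg x) (hle x)) ?_ ?_
  · simpa only [hiff] using hne
  · simpa only [hiff] using supClosed_setOf_pos_and_mul_le hS.le hle hφ_sub hψ_super hψ_mono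

end Submodule

theorem submodularity_lemma_invariant_general
    {K V : Type*} [Field K] [AddCommGroup V] [Module K V] [FiniteDimensional K V]
    {G : Type*} [Group G] (ρ : G →* (V ≃ₗ[K] V))
    (φ ψ : Submodule K V → ℝ)
    (hφ_nonneg : ∀ W, 0 ≤ φ W)
    (hφ_mono : ∀ U W : Submodule K V, U ≤ W → φ U ≤ φ W)
    (hψ_mono : ∀ U W : Submodule K V, U ≤ W → ψ U ≤ ψ W)
    (hφ_sub : ∀ U W : Submodule K V, φ (U ⊔ W) + φ (U ⊓ W) ≤ φ U + φ W)
    (hψ_super : ∀ U W : Submodule K V, ψ U + ψ W ≤ ψ (U ⊔ W) + ψ (U ⊓ W))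
    (hφ_inv : ∀ (g : G) (W : Submodule K V), φ (W.map ((ρ g : V ≃ₗ[K] V) : V →ₗ[K] V)) = φ W)
    (hψ_inv : ∀ (g : G) (W : Submodule K V), ψ (W.map ((ρ g : V ≃ₗ[K] V) : V →ₗ[K] V)) = ψ W)
    (q : Submodule K V → EReal)
    (hq : ∀ W, q W = if ψ W = 0 then 0
      else if φ W = 0 then (if 0 < ψ W then (⊤ : EReal) else (⊥ : EReal))
      else ((ψ W / φ W : ℝ) : EReal)) :
    ∃ x₀ : Submodule K V,
      (∀ x, q x ≤ q x₀) ∧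
      (∀ g : G, x₀.map ((ρ g : V ≃ₗ[K] V) : V →ₗ[K] V) = x₀) := by
  obtain rfl : q = fun W => extendedRatio (ψ W) (φ W) := funext hq
  obtain ⟨x₀, hx₀⟩ := exists_isGreatest_maximizers hφ_nonneg (fun _ _ => hφ_mono _ _)
    (fun _ _ => hψ_mono _ _) hφ_sub hψ_super
  refine ⟨x₀, hx₀.1, fun g => Submodule.map_eq_of_isGreatest hx₀ (ρ g) fun x hx => ?_⟩
  simpa only [Set.mem_ofPred_eq, hφ_inv, hψ_inv] using hx

/-- If moreover `φ` and `ψ` are invariant under a group `G` acting on `V` by linear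
automorphisms, then the supremum of `q = ψ/φ` is attained at a `G`-invariant subspace. -/
theorem submodularity_lemma_invariant
    {K V : Type*} [Field K] [AddCommGroup V] [Module K V] [FiniteDimensional K V]
    {G : Type*} [Group G] (ρ : G →* (V ≃ₗ[K] V))
    (φ ψ : Submodule K V → ℝ)
    (hφ_nonneg : ∀ W, 0 ≤ φ W) (hφ_bot : φ ⊥ = 0)
    (hφ_mono : ∀ U W : Submodule K V, U ≤ W → φ U ≤ φ W)
    (hψ_mono : ∀ U W : Submodule K V, U ≤ W → ψ U ≤ ψ W)
    (hφ_sub : ∀ U W : Submodule K V, φ (U ⊔ W) + φ (U ⊓ W) ≤ φ U + φ W)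
    (hψ_super : ∀ U W : Submodule K V, ψ U + ψ W ≤ ψ (U ⊔ W) + ψ (U ⊓ W))
    (hφ_inv : ∀ (g : G) (W : Submodule K V), φ (W.map ((ρ g : V ≃ₗ[K] V) : V →ₗ[K] V)) = φ W)
    (hψ_inv : ∀ (g : G) (W : Submodule K V), ψ (W.map ((ρ g : V ≃ₗ[K] V) : V →ₗ[K] V)) = ψ W)
    (q : Submodule K V → EReal)
    (hq : ∀ W, q W = if ψ W = 0 then 0
      else if φ W = 0 then (if 0 < ψ W then (⊤ : EReal) else (⊥ : EReal))
      else ((ψ W / φ W : ℝ) : EReal)) :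
    ∃ x₀ : Submodule K V,
      (∀ x, q x ≤ q x₀) ∧
      (∀ g : G, x₀.map ((ρ g : V ≃ₗ[K] V) : V →ₗ[K] V) = x₀) :=
  submodularity_lemma_invariant_general ρ φ ψ hφ_nonneg hφ_mono hψ_mono hφ_sub hψ_super hφ_inv
    hψ_inv q hq
end

section
/- Let q be a quadratic form on ℝ^d that, in some orthonormal basis, can be written without square terms as q(x) = Σ_{k<l} a_{kl} x_k x_l with not all a_{kl} zero. Let μ be Lebesgue measure on the ball of radius 1 centered at 0 in ℝ^d (with the sup or Euclidean norm as in the statement; the paper uses the unit cube [-1,1]^d implicitly via the proof). Then for all ε > 0, μ({x : |q(x)| ≤ ε}) ≤ (2^{d+1} ε / max|a_{kl}|) · (1 + log⁺(√d · max|a_{kl}| / ε)), where log⁺ t = max(0, log t). -/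
/-!
Choose `k < l` with `|a k l| = A`. Since `q` has no square terms, as a function of the two
coordinates `s = x k`, `t = x l` (the others fixed) it reads `a k l * s * t + β * s + γ * t + δ`.
For fixed `s` this is affine in `t` with slope `c = a k l * s + γ`, so the `t`-slice of
`{|q| ≤ ε}` in `[-1, 1]` has length at most `min 2 (2 ε / |c|) ≤ 4 ε / (|c| + ε)`. Integrating
this over `s ∈ [-1, 1]` gives at most `8 ε / A * log (1 + A / ε)`, and each of the remaining
`d - 2` coordinates contributes a factor `2`. Finally `log (1 + x) ≤ 1 + log⁺ x`.
-/

open MeasureTheory Set Real Function Matrix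
open scoped ENNReal

local notation "ν" => volume.restrict (Icc (-1 : ℝ) 1)

theorem log_one_add_le_one_add_posLog (x : ℝ) : log (1 + x) ≤ 1 + log⁺ x :=
  calc log (1 + x) ≤ log⁺ (1 + x) := le_max_right _ _
    _ ≤ log 2 + log⁺ 1 + log⁺ x := posLog_add
    _ ≤ 1 + log⁺ x := by
        rw [posLog_one, add_zero]
        linarith [log_two_lt_d9]

theorem log_one_add_le_one_add_posLog_mul {c x : ℝ} (hc : 1 ≤ c) (hx : 0 ≤ x) :
    log (1 + x) ≤ 1 + log⁺ (c * x) :=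
  (log_one_add_le_one_add_posLog x).trans
    ((add_le_add_iff_left 1).2 (posLog_le_posLog hx (le_mul_of_one_le_left hx hc)))

theorem integral_inv_abs_add_of_nonneg {ε a b : ℝ} (hε : 0 < ε) (ha : 0 ≤ a) (hab : a ≤ b) :
    ∫ u in a..b, (|u| + ε)⁻¹ = log ((b + ε) / (a + ε)) := by
  rw [intervalIntegral.integral_congr (g := fun u => (u + ε)⁻¹),
    intervalIntegral.integral_comp_add_right (fun u => u⁻¹),
    integral_inv_of_pos (by linarith) (by linarith)]
  intro u hu
  rw [uIcc_of_le hab] at hu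
  simp only [abs_of_nonneg (ha.trans hu.1)]

theorem integral_inv_abs_add_le {ε : ℝ} (hε : 0 < ε) (c : ℝ) {r : ℝ} (hr : 0 ≤ r) :
    ∫ u in c - r..c + r, (|u| + ε)⁻¹ ≤ 2 * log (1 + r / ε) := by
  have hcont : Continuous fun u : ℝ => (|u| + ε)⁻¹ :=
    (continuous_abs.add continuous_const).inv₀ fun u =>
      (add_pos_of_nonneg_of_pos (abs_nonneg u) hε).ne'
  have reflect (a b : ℝ) : ∫ u in a..b, (|u| + ε)⁻¹ = ∫ u in -b..-a, (|u| + ε)⁻¹ := by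
    simpa only [abs_neg] using intervalIntegral.integral_comp_neg (a := a) (b := b)
      fun u => (|u| + ε)⁻¹
  wlog hc : 0 ≤ c generalizing c
  · rw [reflect, show -(c + r) = -c - r by ring, show -(c - r) = -c + r by ring]
    exact this (-c) (by linarith)
  have hlog : 2 * log (1 + r / ε) = log (((ε + r) / ε) ^ 2) := by
    rw [log_pow, add_div, div_self hε.ne']
    push_cast
    ring
  rw [hlog]
  rcases le_or_gt r c with hrc | hcr
  · rw [integral_inv_abs_add_of_nonneg hε (by linarith) (by linarith)]
    apply log_le_log (by apply div_pos <;> linarith)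
    rw [div_pow, div_le_div_iff₀ (by linarith) (by positivity)]
    nlinarith [mul_nonneg (mul_nonneg hr hr) hε.le,
      mul_nonneg (mul_nonneg hr hε.le) (sub_nonneg.2 hrc)]
  · -- the window straddles `0`: split it there and reflect the left half
    have hpos (x : ℝ) (hx : 0 ≤ x) : 0 < (x + ε) / (0 + ε) := by apply div_pos <;> linarith
    rw [← intervalIntegral.integral_add_adjacent_intervals (b := 0)
      (hcont.intervalIntegrable _ _) (hcont.intervalIntegrable _ _), reflect, neg_zero,
      integral_inv_abs_add_of_nonneg hε le_rfl (by linarith),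
      integral_inv_abs_add_of_nonneg hε le_rfl (by linarith),
      ← log_mul (hpos _ (by linarith)).ne' (hpos _ (by linarith)).ne']
    apply log_le_log (mul_pos (hpos _ (by linarith)) (hpos _ (by linarith)))
    rw [div_pow, zero_add, div_mul_div_comm, ← sq, div_le_div_iff_of_pos_right (by positivity)]
    nlinarith [sq_nonneg c]

theorem integral_inv_abs_mul_add_le {α : ℝ} (hα : α ≠ 0) (γ : ℝ) {ε : ℝ} (hε : 0 < ε) :
    ∫ s in (-1)..1, (|α * s + γ| + ε)⁻¹ ≤ 2 / |α| * log (1 + |α| / ε) := by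
  have hsubst : ∫ s in (-1)..1, (|α * s + γ| + ε)⁻¹ =
      |α|⁻¹ * ∫ u in γ - |α|..γ + |α|, (|u| + ε)⁻¹ := by
    rw [intervalIntegral.integral_comp_mul_add (fun u => (|u| + ε)⁻¹) hα, smul_eq_mul]
    rcases abs_cases α with ⟨h, -⟩ | ⟨h, -⟩
    · rw [h, mul_neg_one, mul_one, neg_add_eq_sub, add_comm α]
    · rw [h, intervalIntegral.integral_symm, mul_neg_one, mul_one, neg_add_eq_sub, add_comm α,
        inv_neg, sub_neg_eq_add, ← sub_eq_add_neg, mul_neg, neg_mul]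
  rw [hsubst, div_eq_mul_inv, mul_comm 2, mul_assoc]
  exact mul_le_mul_of_nonneg_left (integral_inv_abs_add_le hε γ (abs_nonneg α)) (by positivity)

theorem volume_setOf_abs_mul_add_le {c : ℝ} (hc : c ≠ 0) (e ε : ℝ) :
    volume {t : ℝ | |c * t + e| ≤ ε} = ENNReal.ofReal (2 * ε / |c|) := by
  have : {t : ℝ | |c * t + e| ≤ ε} = (c * ·) ⁻¹' ((· + e) ⁻¹' Icc (-ε) ε) := by
    ext t
    simp only [mem_ofPred_eq, mem_preimage, mem_Icc, abs_le]
  rw [this, Real.volume_preimage_mul_left hc, measure_preimage_add_right, Real.volume_Icc,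
    ← ENNReal.ofReal_mul (abs_nonneg _), abs_inv]
  congr 1
  field_simp
  ring

theorem restrict_Icc_setOf_abs_mul_add_le (c e : ℝ) {ε : ℝ} (hε : 0 < ε) :
    ν {t | |c * t + e| ≤ ε} ≤ ENNReal.ofReal (4 * ε / (|c| + ε)) := by
  rcases le_or_gt |c| ε with hcε | hεc
  · calc ν {t | |c * t + e| ≤ ε} ≤ ν univ := measure_mono (subset_univ _)
      _ = ENNReal.ofReal 2 := by simp; norm_num
      _ ≤ _ := by
        gcongr
        rw [le_div_iff₀ (by positivity)]
        linarith
  · have hc : c ≠ 0 := abs_pos.mp (hε.trans hεc)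
    calc ν {t | |c * t + e| ≤ ε} ≤ volume {t | |c * t + e| ≤ ε} := Measure.restrict_apply_le _ _
      _ = ENNReal.ofReal (2 * ε / |c|) := volume_setOf_abs_mul_add_le hc e ε
      _ ≤ _ := by
        apply ENNReal.ofReal_le_ofReal
        rw [div_le_div_iff₀ (by positivity) (by positivity)]
        nlinarith

theorem lintegral_restrict_Icc_setOf_abs_bilinear_le {α : ℝ} (hα : α ≠ 0) (β γ δ : ℝ) {ε : ℝ}
    (hε : 0 < ε) :
    ∫⁻ s, ν {t | |α * s * t + β * s + γ * t + δ| ≤ ε} ∂ν ≤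
      ENNReal.ofReal (8 * ε / |α| * log (1 + |α| / ε)) := by
  have hcont : Continuous fun s : ℝ => 4 * ε / (|α * s + γ| + ε) :=
    continuous_const.div (by fun_prop) fun s => (add_pos_of_nonneg_of_pos (abs_nonneg _) hε).ne'
  calc ∫⁻ s, ν {t | |α * s * t + β * s + γ * t + δ| ≤ ε} ∂ν
      ≤ ∫⁻ s, ENNReal.ofReal (4 * ε / (|α * s + γ| + ε)) ∂ν := lintegral_mono fun s => by
        have hlin (t : ℝ) : α * s * t + β * s + γ * t + δ = (α * s + γ) * t + (β * s + δ) := by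
          ring
        simpa only [hlin] using restrict_Icc_setOf_abs_mul_add_le (α * s + γ) (β * s + δ) hε
    _ = ENNReal.ofReal (∫ s in Icc (-1) 1, 4 * ε / (|α * s + γ| + ε)) :=
        (ofReal_integral_eq_lintegral_ofReal hcont.integrableOn_Icc
          (.of_forall fun s => by positivity)).symm
    _ = ENNReal.ofReal (4 * ε * ∫ s in (-1)..1, (|α * s + γ| + ε)⁻¹) := by
        rw [integral_Icc_eq_integral_Ioc, ← intervalIntegral.integral_of_le (by norm_num),
          ← intervalIntegral.integral_const_mul]
        rfl
    _ ≤ ENNReal.ofReal (4 * ε * (2 / |α| * log (1 + |α| / ε))) := by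
        gcongr
        exact integral_inv_abs_mul_add_le hα γ hε
    _ = ENNReal.ofReal (8 * ε / |α| * log (1 + |α| / ε)) := by ring_nf

theorem exists_dotProduct_mulVec_update_update {ι R : Type*} [Fintype ι] [DecidableEq ι]
    [CommRing R] (b : Matrix ι ι R) {i j : ι} (hij : i ≠ j) (hi : b i i = 0) (hj : b j j = 0)
    (x : ι → R) :
    ∃ β γ δ : R, ∀ s t : R,
      update (update x i s) j t ⬝ᵥ b *ᵥ update (update x i s) j t =
        (b i j + b j i) * s * t + β * s + γ * t + δ := by
  set z := update (update x i 0) j 0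
  have hsplit (s t : R) :
      update (update x i s) j t = z + s • Pi.single i 1 + t • Pi.single j 1 := by
    ext k
    by_cases hkj : k = j
    · subst hkj
      simp [z, hij.symm]
    · by_cases hki : k = i
      · subst hki
        simp [z, hkj]
      · simp [z, hkj, hki]
  refine ⟨Pi.single i 1 ⬝ᵥ b *ᵥ z + z ⬝ᵥ b *ᵥ Pi.single i 1,
    Pi.single j 1 ⬝ᵥ b *ᵥ z + z ⬝ᵥ b *ᵥ Pi.single j 1, z ⬝ᵥ b *ᵥ z, fun s t => ?_⟩
  simp only [hsplit, mulVec_add, mulVec_smul, add_dotProduct, dotProduct_add, smul_dotProduct,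
    dotProduct_smul, smul_eq_mul, single_one_dotProduct, mulVec_single_one, col_apply, hi, hj]
  ring

theorem lintegral_pi_le_of_lmarginal_le {δ : Type*} [Fintype δ] [DecidableEq δ]
    {X : δ → Type*} [∀ i, MeasurableSpace (X i)] (μ : ∀ i, Measure (X i))
    [∀ i, SigmaFinite (μ i)] (s : Finset δ) {f : (∀ i, X i) → ℝ≥0∞} (hf : Measurable f)
    {B : ℝ≥0∞} (hB : ∀ x, (∫⋯∫⁻_s, f ∂μ) x ≤ B) :
    ∫⁻ x, f x ∂Measure.pi μ ≤ (∏ i ∈ sᶜ, μ i univ) * B := by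
  rcases isEmpty_or_nonempty (∀ i, X i) with h | ⟨⟨x⟩⟩
  · simp [lintegral_of_isEmpty]
  calc ∫⁻ x, f x ∂Measure.pi μ = (∫⋯∫⁻_sᶜ, ∫⋯∫⁻_s, f ∂μ ∂μ) x := by
        rw [lintegral_eq_lmarginal_univ x, ← Finset.union_compl s,
          lmarginal_union' μ f hf disjoint_compl_right]
    _ ≤ (∫⋯∫⁻_sᶜ, fun _ => B ∂μ) x := lmarginal_mono hB x
    _ = (∏ i ∈ sᶜ, μ i univ) * B := by
        rw [lmarginal, lintegral_const, Measure.pi_univ, mul_comm,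
          Finset.prod_coe_sort sᶜ fun i => μ i univ]

theorem measure_pi_setOf_abs_dotProduct_mulVec_le {ι : Type*} [Fintype ι] [DecidableEq ι]
    (b : Matrix ι ι ℝ) {i j : ι} (hij : i ≠ j) (hi : b i i = 0) (hj : b j j = 0)
    (hb : b i j + b j i ≠ 0) {ε : ℝ} (hε : 0 < ε) :
    Measure.pi (fun _ : ι => ν) {x | |x ⬝ᵥ b *ᵥ x| ≤ ε} ≤
      ENNReal.ofReal (2 ^ (Fintype.card ι - 2) *
        (8 * ε / |b i j + b j i| * log (1 + |b i j + b j i| / ε))) := by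
  set S := {x : ι → ℝ | |x ⬝ᵥ b *ᵥ x| ≤ ε}
  have hS : MeasurableSet S := measurableSet_le (by fun_prop) measurable_const
  have hslice (x : ι → ℝ) : (∫⋯∫⁻_{i, j}, S.indicator 1 ∂fun _ => ν) x ≤
      ENNReal.ofReal (8 * ε / |b i j + b j i| * log (1 + |b i j + b j i| / ε)) := by
    obtain ⟨β, γ, δ, hβγδ⟩ := exists_dotProduct_mulVec_update_update b hij hi hj x
    rw [lmarginal_insert _ (measurable_one.indicator hS) (by simpa using hij)]
    simp only [lmarginal_singleton]
    refine (le_of_eq (lintegral_congr fun s => ?_)).trans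
      (lintegral_restrict_Icc_setOf_abs_bilinear_le hb β γ δ hε)
    rw [← lintegral_indicator_one (measurableSet_le (by fun_prop) measurable_const)]
    refine lintegral_congr fun t => ?_
    simp only [indicator_apply, S, mem_ofPred_eq, hβγδ, Pi.one_apply]
  calc Measure.pi (fun _ => ν) S = ∫⁻ x, S.indicator 1 x ∂Measure.pi fun _ => ν :=
        (lintegral_indicator_one hS).symm
    _ ≤ (∏ _ ∈ {i, j}ᶜ, ν univ) *
          ENNReal.ofReal (8 * ε / |b i j + b j i| * log (1 + |b i j + b j i| / ε)) :=
        lintegral_pi_le_of_lmarginal_le _ _ (measurable_one.indicator hS) hslice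
    _ = _ := by
        rw [Finset.prod_const, Finset.card_compl, Finset.card_pair hij,
          Measure.restrict_apply_univ, Real.volume_Icc, ← ENNReal.ofReal_pow (by norm_num),
          ← ENNReal.ofReal_mul (by positivity)]
        norm_num

theorem volume_restrict_setOf_abs_le_one {ι : Type*} [Fintype ι] :
    volume.restrict {x : ι → ℝ | ∀ i, |x i| ≤ 1} = Measure.pi fun _ => ν := by
  rw [volume_pi, ← Measure.restrict_pi_pi]
  congr 1
  ext x
  simp only [mem_ofPred_eq, mem_pi, mem_univ, true_implies, mem_Icc, abs_le]

theorem sum_ite_lt_mul_eq_dotProduct_mulVec {ι R : Type*} [Fintype ι] [LinearOrder ι]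
    [CommSemiring R] (a : ι → ι → R) (x : ι → R) :
    ∑ k, ∑ l, (if k < l then a k l * x k * x l else 0) =
      x ⬝ᵥ (Matrix.of fun k l => if k < l then a k l else 0) *ᵥ x := by
  simp only [dotProduct, mulVec, Finset.mul_sum, of_apply]
  refine Finset.sum_congr rfl fun k _ => Finset.sum_congr rfl fun l _ => ?_
  split_ifs <;> ring

/-- Remez-type inequality for quadratic forms without square terms: if
`q(x) = ∑_{k<l} a_{kl} x_k x_l` with `A = max |a_{kl}| > 0`, and `μ` is Lebesgue measure
restricted to the unit ball `{x : ∀ i, |x i| ≤ 1}` of `ℝ^d`, then for all `ε > 0`,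
`μ {x : |q x| ≤ ε} ≤ (2^{d+1} ε / A) (1 + log⁺(√d A / ε))`. -/
theorem quadratic_level_set_measure
    {d : ℕ} (a : Fin d → Fin d → ℝ) (A : ℝ)
    (hA_bound : ∀ k l : Fin d, k < l → |a k l| ≤ A)
    (hA_max : ∃ k l : Fin d, k < l ∧ |a k l| = A)
    (h_ne : ∃ k l : Fin d, k < l ∧ a k l ≠ 0)
    (μ : Measure (Fin d → ℝ))
    (hμ : μ = volume.restrict {x : Fin d → ℝ | ∀ i, |x i| ≤ 1}) :
    ∀ ε : ℝ, 0 < ε →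
      μ {x : Fin d → ℝ | |∑ k : Fin d, ∑ l : Fin d, (if k < l then a k l * x k * x l else 0)| ≤ ε}
        ≤ ENNReal.ofReal ((2 ^ (d + 1) * ε / A) * (1 + max 0 (Real.log (Real.sqrt d * A / ε)))) := by
  intro ε hε
  obtain ⟨k, l, hkl, hklA⟩ := hA_max
  have hA : 0 < A := by
    obtain ⟨k', l', hkl', hne⟩ := h_ne
    exact (abs_pos.2 hne).trans_le (hA_bound k' l' hkl')
  have hd : 2 ≤ d := by
    have : k.val < l.val := hkl
    omega
  set b : Matrix (Fin d) (Fin d) ℝ := Matrix.of fun k l => if k < l then a k l else 0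
  have hbkl : b k l + b l k = a k l := by simp [b, hkl, hkl.not_gt]
  have hlog : log (1 + A / ε) ≤ 1 + max 0 (log (√d * A / ε)) := by
    rw [mul_div_assoc]
    exact log_one_add_le_one_add_posLog_mul (one_le_sqrt.2 (by norm_cast; omega)) (by positivity)
  calc μ {x | |∑ k, ∑ l, (if k < l then a k l * x k * x l else 0)| ≤ ε}
      = Measure.pi (fun _ => ν) {x | |x ⬝ᵥ b *ᵥ x| ≤ ε} := by
        simp only [hμ, volume_restrict_setOf_abs_le_one, sum_ite_lt_mul_eq_dotProduct_mulVec, b]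
    _ ≤ ENNReal.ofReal (2 ^ (d - 2) * (8 * ε / A * log (1 + A / ε))) := by
        simpa only [hbkl, hklA, Fintype.card_fin] using
          measure_pi_setOf_abs_dotProduct_mulVec_le b hkl.ne (by simp [b]) (by simp [b])
            (hbkl ▸ abs_pos.1 (hklA ▸ hA)) hε
    _ = ENNReal.ofReal (2 ^ (d + 1) * ε / A * log (1 + A / ε)) := by
        rw [show d + 1 = d - 2 + 3 by omega, pow_add]
        ring_nf
    _ ≤ _ := by gcongr
end

section
/- Let 𝔤 be a nilpotent Lie algebra of step s, and let Aut(F_{k,s})(ℝ) denote the group of Lie algebra automorphisms of the free s-step nilpotent Lie algebra F_{k,s} on k generators, acting on 𝔤^k by substitution. If k ≥ dim(𝔤/[𝔤,𝔤]), then any two k-tuples X, X' ∈ 𝔤^k whose reductions modulo [𝔤,𝔤] each span 𝔤/[𝔤,𝔤] lie in the same Aut(F_{k,s})(ℝ)-orbit; in particular Aut(F_{k,s})(ℝ) has a Zariski-open (and Lebesgue co-null) orbit on 𝔤^k. -/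
/-- The free `s`-step nilpotent Lie algebra on `k` generators over `ℝ`. -/
abbrev FreeNilpotentLie (k s : ℕ) :=
  FreeLieAlgebra ℝ (Fin k) ⧸
    LieModule.lowerCentralSeries ℝ (FreeLieAlgebra ℝ (Fin k)) (FreeLieAlgebra ℝ (Fin k)) s

/-- The images of the free generators in the free `s`-step nilpotent Lie algebra. -/
noncomputable def freeNilpotentGen (k s : ℕ) (i : Fin k) : FreeNilpotentLie k s :=
  LieSubmodule.Quotient.mk'
    (LieModule.lowerCentralSeries ℝ (FreeLieAlgebra ℝ (Fin k)) (FreeLieAlgebra ℝ (Fin k)) s)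
    (FreeLieAlgebra.of ℝ i)

/-!
Modulo `[𝔤,𝔤]` the substitution action of `Aut(F_{k,s})` contains the action of `GL_k(ℝ)` on
`k`-tuples in `𝔤/[𝔤,𝔤]` (through the linear substitutions `xᵢ ↦ ∑ⱼ gᵢⱼ xⱼ`), which is transitive
on spanning tuples. It remains to move a spanning tuple `Y` to a tuple `X'` with `X' - Y` in
`[𝔤,𝔤]`. A spanning tuple generates the nilpotent Lie algebra `𝔤` (Nakayama), so each `X'ᵢ - Yᵢ`
is the value at `Y` of some `γᵢ ∈ [F,F]`, and the substitution `xᵢ ↦ xᵢ + γᵢ` is invertible: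
such unipotent endomorphisms of `F` are surjective, again by Nakayama, and their sections,
which exist by freeness, are unipotent too.
-/

open LieModule

section LowerCentralSeries

variable {R L M : Type*} [CommRing R] [LieRing L] [LieAlgebra R L]
  [AddCommGroup M] [Module R M] [LieRingModule L M] [LieModule R L M]

lemma LieSubmodule.lie_lie_le_sup (I J : LieIdeal R L) (N : LieSubmodule R L M) :
    ⁅⁅I, J⁆, N⁆ ≤ ⁅I, ⁅J, N⁆⁆ ⊔ ⁅J, ⁅I, N⁆⁆ := by
  rw [lie_le_iff]
  intro x hx n hn
  rw [← mem_toSubmodule, lieIdeal_oper_eq_linear_span'] at hx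
  induction hx using Submodule.span_induction with
  | mem _ hx =>
    obtain ⟨a, ha, b, hb, rfl⟩ := hx
    rw [lie_lie]
    exact sub_mem (mem_sup_left (lie_mem_lie ha (lie_mem_lie hb hn)))
      (mem_sup_right (lie_mem_lie hb (lie_mem_lie ha hn)))
  | zero => simp
  | add x y _ _ hx hy => rw [add_lie]; exact add_mem hx hy
  | smul t x _ hx => rw [smul_lie]; exact SMulMemClass.smul_mem t hx

lemma LieModule.lie_lowerCentralSeries_le (i j : ℕ) :
    ⁅lowerCentralSeries R L L i, lowerCentralSeries R L M j⁆ ≤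
      lowerCentralSeries R L M (i + j + 1) := by
  induction i generalizing j with
  | zero => simp
  | succ i ih =>
    calc ⁅lowerCentralSeries R L L (i + 1), lowerCentralSeries R L M j⁆
        ≤ ⁅⊤, ⁅lowerCentralSeries R L L i, lowerCentralSeries R L M j⁆⁆ ⊔
            ⁅lowerCentralSeries R L L i, lowerCentralSeries R L M (j + 1)⁆ := by
          rw [lowerCentralSeries_succ, lowerCentralSeries_succ]
          exact LieSubmodule.lie_lie_le_sup _ _ _
      _ ≤ lowerCentralSeries R L M (i + 1 + j + 1) := by
        refine sup_le ?_ ?_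
        · grw [ih j, ← lowerCentralSeries_succ, show i + j + 1 + 1 = i + 1 + j + 1 by omega]
        · grw [ih (j + 1), show i + (j + 1) + 1 = i + 1 + j + 1 by omega]

namespace LieSubalgebra

variable (H : LieSubalgebra R L)

lemma lowerCentralSeries_le_inf_sup
    (h : H.toSubmodule ⊔ (lowerCentralSeries R L L 1).toSubmodule = ⊤) (m : ℕ) :
    (lowerCentralSeries R L L m).toSubmodule ≤
      H.toSubmodule ⊓ (lowerCentralSeries R L L m).toSubmodule ⊔
        (lowerCentralSeries R L L (m + 1)).toSubmodule := by
  have hdecomp (a : L) : ∃ a₁ ∈ H, ∃ a₂ ∈ lowerCentralSeries R L L 1, a₁ + a₂ = a :=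
    Submodule.mem_sup.1 (h ▸ Submodule.mem_top)
  induction m with
  | zero =>
    intro a _
    obtain ⟨a₁, ha₁, a₂, ha₂, rfl⟩ := hdecomp a
    exact add_mem (Submodule.mem_sup_left ⟨ha₁, trivial⟩) (Submodule.mem_sup_right ha₂)
  | succ m ih =>
    have hspan : (lowerCentralSeries R L L (m + 1)).toSubmodule = Submodule.span R
        {x | ∃ a ∈ (⊤ : LieIdeal R L), ∃ b ∈ lowerCentralSeries R L L m, ⁅a, b⁆ = x} := by
      rw [lowerCentralSeries_succ, LieSubmodule.lieIdeal_oper_eq_linear_span']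
    refine hspan.le.trans (Submodule.span_le.2 ?_)
    rintro _ ⟨a, -, b, hb, rfl⟩
    obtain ⟨a₁, ha₁, a₂, ha₂, rfl⟩ := hdecomp a
    obtain ⟨b₁, ⟨hb₁H, hb₁⟩, b₂, hb₂, rfl⟩ := Submodule.mem_sup.1 (ih hb)
    have hab₁ : ⁅a₁, b₁⁆ ∈ lowerCentralSeries R L L (m + 1) := by
      rw [lowerCentralSeries_succ]
      exact LieSubmodule.lie_mem_lie (LieSubmodule.mem_top _) hb₁
    have hab₂ : ⁅a₂, b₁⁆ ∈ lowerCentralSeries R L L (m + 1 + 1) := by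
      rw [show m + 1 + 1 = 1 + m + 1 by omega]
      exact lie_lowerCentralSeries_le 1 m (LieSubmodule.lie_mem_lie ha₂ hb₁)
    have hab : ⁅a₁ + a₂, b₂⁆ ∈ lowerCentralSeries R L L (m + 1 + 1) := by
      rw [lowerCentralSeries_succ R L L (m + 1)]
      exact LieSubmodule.lie_mem_lie (LieSubmodule.mem_top _) hb₂
    rw [SetLike.mem_coe, lie_add, add_lie]
    exact add_mem (add_mem (Submodule.mem_sup_left ⟨H.lie_mem ha₁ hb₁H, hab₁⟩)
      (Submodule.mem_sup_right hab₂)) (Submodule.mem_sup_right hab)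

lemma eq_top_of_sup_lowerCentralSeries_eq_top [LieRing.IsNilpotent L]
    (h : H.toSubmodule ⊔ (lowerCentralSeries R L L 1).toSubmodule = ⊤) : H = ⊤ := by
  obtain ⟨s, hs⟩ := IsNilpotent.nilpotent R L L
  have key (m : ℕ) : H.toSubmodule ⊔ (lowerCentralSeries R L L m).toSubmodule = ⊤ := by
    induction m with
    | zero => simp
    | succ m ih =>
      rw [eq_top_iff, ← ih]
      refine sup_le le_sup_left ((H.lowerCentralSeries_le_inf_sup h m).trans ?_)
      exact sup_le_sup_right inf_le_left _
  have := key s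
  rw [hs, LieSubmodule.bot_toSubmodule, sup_bot_eq] at this
  rwa [← toSubmodule_inj, top_toSubmodule]

end LieSubalgebra

lemma LieHom.surjective_of_range_sup_eq_top {L' : Type*} [LieRing L'] [LieAlgebra R L']
    [LieRing.IsNilpotent L] (f : L' →ₗ⁅R⁆ L)
    (h : f.range.toSubmodule ⊔ (lowerCentralSeries R L L 1).toSubmodule = ⊤) :
    Function.Surjective f :=
  f.range_eq_top.1 (f.range.eq_top_of_sup_lowerCentralSeries_eq_top h)

end LowerCentralSeries

namespace LieIdeal

variable {R L L' : Type*} [CommRing R] [LieRing L] [LieAlgebra R L] [LieRing L'] [LieAlgebra R L']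
  (I : LieIdeal R L)

def quotientMk : L →ₗ⁅R⁆ L ⧸ I :=
  { (LieSubmodule.Quotient.mk' I : L →ₗ[R] L ⧸ I) with map_lie' := rfl }

lemma quotientMk_surjective : Function.Surjective I.quotientMk :=
  LieSubmodule.Quotient.surjective_mk' I

def quotientLift (f : L →ₗ⁅R⁆ L') (h : I ≤ f.ker) : L ⧸ I →ₗ⁅R⁆ L' :=
  { (I : Submodule R L).liftQ f (fun _ hx => LinearMap.mem_ker.2 (LieHom.mem_ker.1 (h hx))) with
    map_lie' := by
      rintro ⟨x⟩ ⟨y⟩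
      exact f.map_lie x y }

end LieIdeal

namespace FreeNilpotentLie

variable {k s : ℕ} {L : Type*} [LieRing L] [LieAlgebra ℝ L]

lemma lowerCentralSeries_eq_bot :
    lowerCentralSeries ℝ (FreeNilpotentLie k s) (FreeNilpotentLie k s) s = ⊥ := by
  rw [← LieIdeal.lowerCentralSeries_map_eq s (LieIdeal.quotientMk_surjective _), eq_bot_iff,
    LieIdeal.map_le]
  rintro _ ⟨x, hx, rfl⟩
  exact (LieSubmodule.Quotient.mk_eq_zero _).2 hx

instance : LieRing.IsNilpotent (FreeNilpotentLie k s) :=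
  LieModule.IsNilpotent.mk _ lowerCentralSeries_eq_bot

noncomputable def lift (Y : Fin k → L) (hL : lowerCentralSeries ℝ L L s = ⊥) :
    FreeNilpotentLie k s →ₗ⁅ℝ⁆ L :=
  LieIdeal.quotientLift _ (FreeLieAlgebra.lift ℝ Y) fun _ hx => LieHom.mem_ker.2 <| by
    simpa [hL] using
      LieIdeal.map_lowerCentralSeries_le s (f := FreeLieAlgebra.lift ℝ Y) (LieIdeal.mem_map hx)

@[simp] lemma lift_freeNilpotentGen (Y : Fin k → L) (hL : lowerCentralSeries ℝ L L s = ⊥)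
    (i : Fin k) : lift Y hL (freeNilpotentGen k s i) = Y i :=
  FreeLieAlgebra.lift_of_apply Y i

@[ext] lemma hom_ext {f g : FreeNilpotentLie k s →ₗ⁅ℝ⁆ L}
    (h : ∀ i, f (freeNilpotentGen k s i) = g (freeNilpotentGen k s i)) : f = g := by
  have : f.comp (LieIdeal.quotientMk _) = g.comp (LieIdeal.quotientMk _) :=
    FreeLieAlgebra.hom_ext h
  ext x
  obtain ⟨x, rfl⟩ := LieIdeal.quotientMk_surjective _ x
  exact LieHom.congr_fun this x

lemma sub_mem_lowerCentralSeries_one (f g : FreeNilpotentLie k s →ₗ⁅ℝ⁆ L)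
    (h : ∀ i, f (freeNilpotentGen k s i) - g (freeNilpotentGen k s i) ∈
      lowerCentralSeries ℝ L L 1) (x : FreeNilpotentLie k s) :
    f x - g x ∈ lowerCentralSeries ℝ L L 1 := by
  have : (LieIdeal.quotientMk _).comp f =
      (LieIdeal.quotientMk (lowerCentralSeries ℝ L L 1)).comp g := by
    ext i
    exact (Submodule.Quotient.eq _).2 (h i)
  exact (Submodule.Quotient.eq _).1 (LieHom.congr_fun this x)

lemma exists_comp_eq_id_of_surjective (φ : L →ₗ⁅ℝ⁆ FreeNilpotentLie k s)
    (hφ : Function.Surjective φ) (hL : lowerCentralSeries ℝ L L s = ⊥) :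
    ∃ σ : FreeNilpotentLie k s →ₗ⁅ℝ⁆ L, φ.comp σ = LieHom.id := by
  choose Y hY using fun i => hφ (freeNilpotentGen k s i)
  exact ⟨lift Y hL, by ext i; simp [hY]⟩

lemma bijective_of_sub_mem_lowerCentralSeries_one
    (ψ : FreeNilpotentLie k s →ₗ⁅ℝ⁆ FreeNilpotentLie k s)
    (h : ∀ i, ψ (freeNilpotentGen k s i) - freeNilpotentGen k s i ∈
      lowerCentralSeries ℝ (FreeNilpotentLie k s) (FreeNilpotentLie k s) 1) :
    Function.Bijective ψ := by
  let IsUnipotent (φ : FreeNilpotentLie k s →ₗ⁅ℝ⁆ FreeNilpotentLie k s) : Prop :=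
    ∀ x, φ x - x ∈ lowerCentralSeries ℝ (FreeNilpotentLie k s) (FreeNilpotentLie k s) 1
  have exists_section {φ} (hφ : IsUnipotent φ) : ∃ σ, φ.comp σ = LieHom.id ∧ IsUnipotent σ := by
    have hsurj : Function.Surjective φ := φ.surjective_of_range_sup_eq_top <| by
      refine eq_top_iff.2 fun x _ => ?_
      rw [show x = φ x - (φ x - x) by abel]
      exact Submodule.sub_mem_sup (φ.mem_range_self x) (hφ x)
    obtain ⟨σ, hσ⟩ := exists_comp_eq_id_of_surjective φ hsurj lowerCentralSeries_eq_bot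
    refine ⟨σ, hσ, fun x => ?_⟩
    have hφσ : φ (σ x) = x := LieHom.congr_fun hσ x
    simpa [hφσ] using neg_mem (hφ (σ x))
  obtain ⟨σ, hψσ, hσ⟩ := exists_section (sub_mem_lowerCentralSeries_one ψ LieHom.id h)
  obtain ⟨τ, hστ, -⟩ := exists_section hσ
  -- `τ = ψ σ τ = ψ`, so `σ` is a two-sided inverse of `ψ`.
  have hτ : τ = ψ := LieHom.ext fun x =>
    calc τ x = ψ (σ (τ x)) := (LieHom.congr_fun hψσ (τ x)).symm
      _ = ψ x := congrArg ψ (LieHom.congr_fun hστ x)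
  rw [hτ] at hστ
  exact Function.bijective_iff_has_inverse.2
    ⟨σ, LieHom.congr_fun hστ, LieHom.congr_fun hψσ⟩

lemma exists_lieEquiv_apply_freeNilpotentGen_eq (φ : FreeNilpotentLie k s →ₗ⁅ℝ⁆ L)
    (hφ : Function.Surjective φ) (Y : Fin k → L)
    (hY : ∀ i, Y i - φ (freeNilpotentGen k s i) ∈ lowerCentralSeries ℝ L L 1) :
    ∃ u : FreeNilpotentLie k s ≃ₗ⁅ℝ⁆ FreeNilpotentLie k s,
      ∀ i, φ (u (freeNilpotentGen k s i)) = Y i := by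
  have hmap := LieIdeal.lowerCentralSeries_map_eq 1 hφ
  choose γ hγ using fun i => LieIdeal.mem_map_of_surjective hφ (hmap ▸ hY i)
  let ψ := lift (fun i => freeNilpotentGen k s i + γ i) lowerCentralSeries_eq_bot
  have hψ : Function.Bijective ψ :=
    bijective_of_sub_mem_lowerCentralSeries_one ψ fun i => by simpa [ψ] using (γ i).2
  exact ⟨LieEquiv.ofBijective ψ hψ, fun i => by simp [ψ, hγ]⟩

noncomputable def linearSubst (T : Module.End ℝ (Fin k → ℝ)) :
    FreeNilpotentLie k s →ₗ⁅ℝ⁆ FreeNilpotentLie k s :=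
  lift (fun i => Fintype.linearCombination ℝ (freeNilpotentGen k s) (T (Pi.single i 1)))
    lowerCentralSeries_eq_bot

@[simp] lemma linearSubst_freeNilpotentGen (T : Module.End ℝ (Fin k → ℝ)) (i : Fin k) :
    linearSubst T (freeNilpotentGen k s i) =
      Fintype.linearCombination ℝ (freeNilpotentGen k s) (T (Pi.single i 1)) :=
  lift_freeNilpotentGen _ _ i

lemma linearSubst_linearCombination (T : Module.End ℝ (Fin k → ℝ)) (v : Fin k → ℝ) :
    linearSubst T (Fintype.linearCombination ℝ (freeNilpotentGen k s) v) =
      Fintype.linearCombination ℝ (freeNilpotentGen k s) (T v) := by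
  have : (linearSubst (s := s) T).toLinearMap ∘ₗ
      Fintype.linearCombination ℝ (freeNilpotentGen k s) =
      Fintype.linearCombination ℝ (freeNilpotentGen k s) ∘ₗ T := by
    ext i
    simp
  exact LinearMap.congr_fun this v

lemma linearSubst_comp_linearSubst_symm (e : (Fin k → ℝ) ≃ₗ[ℝ] (Fin k → ℝ)) :
    (linearSubst (k := k) (s := s) e.toLinearMap).comp (linearSubst e.symm.toLinearMap) =
      LieHom.id := by
  ext i
  simp [linearSubst_linearCombination]

noncomputable def ofLinearEquiv (e : (Fin k → ℝ) ≃ₗ[ℝ] (Fin k → ℝ)) :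
    FreeNilpotentLie k s ≃ₗ⁅ℝ⁆ FreeNilpotentLie k s :=
  { linearSubst e.toLinearMap with
    invFun := linearSubst e.symm.toLinearMap
    left_inv x := by simpa using LieHom.congr_fun (linearSubst_comp_linearSubst_symm e.symm) x
    right_inv := LieHom.congr_fun (linearSubst_comp_linearSubst_symm e) }

lemma ofLinearEquiv_freeNilpotentGen (e : (Fin k → ℝ) ≃ₗ[ℝ] (Fin k → ℝ)) (i : Fin k) :
    ofLinearEquiv e (freeNilpotentGen k s i) =
      Fintype.linearCombination ℝ (freeNilpotentGen k s) (e (Pi.single i 1)) :=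
  linearSubst_freeNilpotentGen _ i

end FreeNilpotentLie

namespace LinearMap

variable {K W V : Type*} [DivisionRing K] [AddCommGroup W] [Module K W]
  [AddCommGroup V] [Module K V]

noncomputable def complEquivOfSurjective (f : W →ₗ[K] V) (hf : Function.Surjective f)
    {C : Submodule K W} (hC : IsCompl (ker f) C) : C ≃ₗ[K] V :=
  (Submodule.quotientEquivOfIsCompl _ _ hC).symm ≪≫ₗ f.quotKerEquivOfSurjective hf

@[simp] lemma complEquivOfSurjective_apply (f : W →ₗ[K] V) (hf : Function.Surjective f)
    {C : Submodule K W} (hC : IsCompl (ker f) C) (c : C) :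
    f.complEquivOfSurjective hf hC c = f c := by
  simp [complEquivOfSurjective]

lemma exists_linearEquiv_comp_eq_of_surjective [FiniteDimensional K W] (f g : W →ₗ[K] V)
    (hf : Function.Surjective f) (hg : Function.Surjective g) :
    ∃ e : W ≃ₗ[K] W, f ∘ₗ e = g := by
  obtain ⟨Cf, hCf⟩ := (ker f).exists_isCompl
  obtain ⟨Cg, hCg⟩ := (ker g).exists_isCompl
  have hrank : Module.finrank K (ker g) = Module.finrank K (ker f) := by
    have := (f.quotKerEquivOfSurjective hf).finrank_eq
    have := (g.quotKerEquivOfSurjective hg).finrank_eq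
    have := (ker f).finrank_quotient_add_finrank
    have := (ker g).finrank_quotient_add_finrank
    omega
  -- `ker g ⊕ Cg ≃ ker f ⊕ Cf`, abstractly on the kernels and through `V` on the complements
  let e := (Submodule.prodEquivOfIsCompl _ _ hCg).symm ≪≫ₗ
    (LinearEquiv.ofFinrankEq _ _ hrank).prodCongr
      (g.complEquivOfSurjective hg hCg ≪≫ₗ (f.complEquivOfSurjective hf hCf).symm) ≪≫ₗ
    Submodule.prodEquivOfIsCompl _ _ hCf
  refine ⟨e, ?_⟩
  ext w
  obtain ⟨⟨a, c⟩, rfl⟩ := (Submodule.prodEquivOfIsCompl _ _ hCg).surjective w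
  have key := (f.complEquivOfSurjective hf hCf).apply_symm_apply (g c)
  rw [complEquivOfSurjective_apply] at key
  simp [e, key]

end LinearMap

lemma Submodule.mkQ_comp_linearCombination_surjective {R M ι : Type*} [Ring R] [AddCommGroup M]
    [Module R M] [Fintype ι] (N : Submodule R M) (v : ι → M)
    (h : span R (Set.range v) ⊔ N = ⊤) :
    Function.Surjective (N.mkQ ∘ₗ Fintype.linearCombination R v) := by
  rw [← LinearMap.range_eq_top, LinearMap.range_comp, Fintype.range_linearCombination,
    map_mkQ_eq_top, sup_comm, h]

theorem free_nilpotent_aut_orbit_general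
    {𝔤 : Type*} [LieRing 𝔤] [LieAlgebra ℝ 𝔤]
    (k s : ℕ)
    (hnil : LieModule.lowerCentralSeries ℝ 𝔤 𝔤 s = ⊥)
    (ev : (Fin k → 𝔤) → (FreeNilpotentLie k s →ₗ⁅ℝ⁆ 𝔤))
    (hev : ∀ (X : Fin k → 𝔤) (i : Fin k), ev X (freeNilpotentGen k s i) = X i)
    (X X' : Fin k → 𝔤)
    (hX : Submodule.span ℝ (Set.range X) ⊔
      LieSubmodule.toSubmodule (⁅(⊤ : LieIdeal ℝ 𝔤), (⊤ : LieIdeal ℝ 𝔤)⁆ : LieIdeal ℝ 𝔤) = ⊤)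
    (hX' : Submodule.span ℝ (Set.range X') ⊔
      LieSubmodule.toSubmodule (⁅(⊤ : LieIdeal ℝ 𝔤), (⊤ : LieIdeal ℝ 𝔤)⁆ : LieIdeal ℝ 𝔤) = ⊤) :
    ∃ α : FreeNilpotentLie k s ≃ₗ⁅ℝ⁆ FreeNilpotentLie k s,
      ∀ i : Fin k, X' i = ev X (α (freeNilpotentGen k s i)) := by
  have : LieRing.IsNilpotent 𝔤 := LieModule.IsNilpotent.mk _ hnil
  have hsurj : Function.Surjective (ev X) := (ev X).surjective_of_range_sup_eq_top <| by
    refine eq_top_iff.2 (hX.symm.le.trans (sup_le_sup_right (Submodule.span_le.2 ?_) _))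
    rintro _ ⟨i, rfl⟩
    exact ⟨freeNilpotentGen k s i, hev X i⟩
  obtain ⟨e, he⟩ := LinearMap.exists_linearEquiv_comp_eq_of_surjective _ _
    (Submodule.mkQ_comp_linearCombination_surjective _ X hX)
    (Submodule.mkQ_comp_linearCombination_surjective _ X' hX')
  let α₁ : FreeNilpotentLie k s ≃ₗ⁅ℝ⁆ FreeNilpotentLie k s := FreeNilpotentLie.ofLinearEquiv e
  let φ : FreeNilpotentLie k s →ₗ⁅ℝ⁆ 𝔤 := (ev X).comp α₁.toLieHom
  have hφ (i : Fin k) : X' i - φ (freeNilpotentGen k s i) ∈ lowerCentralSeries ℝ 𝔤 𝔤 1 := by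
    have hφi : φ (freeNilpotentGen k s i) = Fintype.linearCombination ℝ X (e (Pi.single i 1)) := by
      simp [φ, α₁, FreeNilpotentLie.ofLinearEquiv_freeNilpotentGen,
        Fintype.linearCombination_apply, hev]
    have := LinearMap.congr_fun he (Pi.single i 1)
    simp only [LinearMap.comp_apply, Fintype.linearCombination_apply_single, one_smul,
      Submodule.mkQ_apply] at this
    rw [hφi]
    exact (Submodule.Quotient.eq _).1 this.symm
  obtain ⟨u, hu⟩ := FreeNilpotentLie.exists_lieEquiv_apply_freeNilpotentGen_eq φ
    (hsurj.comp α₁.surjective) X' hφ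
  exact ⟨u.trans α₁, fun i => (hu i).symm⟩

/-- Let `𝔤` be an `s`-step nilpotent real Lie algebra and let the automorphism group of the
free `s`-step nilpotent Lie algebra `F_{k,s}` act on `𝔤^k` by substitution, via the
evaluation maps `ev X : F_{k,s} → 𝔤` sending the `i`-th generator to `Xᵢ`. If
`k ≥ dim(𝔤/[𝔤,𝔤])`, then any two tuples `X, X'` whose reductions mod `[𝔤,𝔤]` span
`𝔤/[𝔤,𝔤]` lie in the same orbit. -/
theorem free_nilpotent_aut_orbit
    {𝔤 : Type*} [LieRing 𝔤] [LieAlgebra ℝ 𝔤] [Module.Finite ℝ 𝔤]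
    (k s : ℕ)
    (hnil : LieModule.lowerCentralSeries ℝ 𝔤 𝔤 s = ⊥)
    (hk : Module.finrank ℝ
      (𝔤 ⧸ (LieSubmodule.toSubmodule (⁅(⊤ : LieIdeal ℝ 𝔤), (⊤ : LieIdeal ℝ 𝔤)⁆ : LieIdeal ℝ 𝔤)))
        ≤ k)
    (ev : (Fin k → 𝔤) → (FreeNilpotentLie k s →ₗ⁅ℝ⁆ 𝔤))
    (hev : ∀ (X : Fin k → 𝔤) (i : Fin k), ev X (freeNilpotentGen k s i) = X i)
    (X X' : Fin k → 𝔤)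
    (hX : Submodule.span ℝ (Set.range X) ⊔
      LieSubmodule.toSubmodule (⁅(⊤ : LieIdeal ℝ 𝔤), (⊤ : LieIdeal ℝ 𝔤)⁆ : LieIdeal ℝ 𝔤) = ⊤)
    (hX' : Submodule.span ℝ (Set.range X') ⊔
      LieSubmodule.toSubmodule (⁅(⊤ : LieIdeal ℝ 𝔤), (⊤ : LieIdeal ℝ 𝔤)⁆ : LieIdeal ℝ 𝔤) = ⊤) :
    ∃ α : FreeNilpotentLie k s ≃ₗ⁅ℝ⁆ FreeNilpotentLie k s,
      ∀ i : Fin k, X' i = ev X (α (freeNilpotentGen k s i)) :=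
  free_nilpotent_aut_orbit_general k s hnil ev hev X X' hX hX'
end

section
/- Let V be a d-dimensional real vector space with a full flag 0 = V_1 < V_2 < … < V_d < V_{d+1} = V and weights α_1 ≥ … ≥ α_d > 0, with the convention α_{d+1} = 0. For a subspace W ≤ V, define I(W) = { i : dim(V_{i+1} ∩ W) = dim(V_i ∩ W) + 1 } and ψ(W) = Σ_{i ∈ I(W)} α_i. Then ψ(W) = Σ_{i=1}^d (α_i − α_{i+1})·dim(V_{i+1} ∩ W); consequently ψ is non-decreasing for inclusion of subspaces and supermodular: ψ(U+W) + ψ(U∩W) ≥ ψ(U) + ψ(W) for all subspaces U, W. -/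
/-- Let `V` be a `d`-dimensional real vector space with a full flag
`0 = V₁ < V₂ < … < V_d < V_{d+1} = V` and weights `α₁ ≥ … ≥ α_d > 0` (with `α_{d+1} = 0`),
and let `ψ(W) = ∑_{i ∈ I(W)} αᵢ` where `I(W)` is the set of jump indices of the flag in `W`.
Then `ψ(W) = ∑_{i=1}^d (αᵢ − α_{i+1})·dim(V_{i+1} ∩ W)`; consequently `ψ` is non-decreasing
for inclusion and supermodular. -/
theorem flag_volume_exponent_supermodular
    {V : Type*} [AddCommGroup V] [Module ℝ V] [FiniteDimensional ℝ V]
    (d : ℕ) (hd : Module.finrank ℝ V = d)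
    (flag : ℕ → Submodule ℝ V)
    (h_bot : flag 1 = ⊥) (h_top : flag (d + 1) = ⊤)
    (h_lt : ∀ i, 1 ≤ i → i ≤ d → flag i < flag (i + 1))
    (α : ℕ → ℝ)
    (hα_pos : ∀ i, 1 ≤ i → i ≤ d → 0 < α i)
    (hα_anti : ∀ i, 1 ≤ i → i < d → α (i + 1) ≤ α i)
    (hα_last : α (d + 1) = 0)
    (ψ : Submodule ℝ V → ℝ)
    (hψ : ∀ W : Submodule ℝ V, ψ W = ∑ i ∈ Finset.Icc 1 d,
      (if Module.finrank ℝ ↥(flag (i + 1) ⊓ W) = Module.finrank ℝ ↥(flag i ⊓ W) + 1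
        then α i else 0)) :
    (∀ W : Submodule ℝ V, ψ W = ∑ i ∈ Finset.Icc 1 d,
        (α i - α (i + 1)) * (Module.finrank ℝ ↥(flag (i + 1) ⊓ W) : ℝ)) ∧
    (∀ U W : Submodule ℝ V, U ≤ W → ψ U ≤ ψ W) ∧
    (∀ U W : Submodule ℝ V, ψ U + ψ W ≤ ψ (U ⊔ W) + ψ (U ⊓ W)) := by
  have hmono_flag : ∀ i, 1 ≤ i → i ≤ d → flag i ≤ flag (i + 1) :=
    fun i h1 h2 => (h_lt i h1 h2).le
  have hstep : ∀ i, 1 ≤ i → i ≤ d →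
      Module.finrank ℝ (flag i) + 1 ≤ Module.finrank ℝ (flag (i + 1)) :=
    fun i h1 h2 => Submodule.finrank_lt_finrank_of_lt (h_lt i h1 h2)
  have hchain : ∀ k i, 1 ≤ i → i + k ≤ d + 1 →
      Module.finrank ℝ (flag i) + k ≤ Module.finrank ℝ (flag (i + k)) := by
    intro k
    induction k with
    | zero => intro i _ _; simp
    | succ n ih =>
      intro i h1 h2
      have h2' : i + n ≤ d := by omega
      have ha := ih i h1 (by omega)
      have hb := hstep (i + n) (by omega) h2'
      have : i + (n + 1) = (i + n) + 1 := by omega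
      rw [this]
      omega
  have hr1 : Module.finrank ℝ (flag 1) = 0 := by rw [h_bot]; exact finrank_bot ℝ V
  have hrtop : Module.finrank ℝ (flag (d + 1)) = d := by
    rw [h_top, finrank_top, hd]
  have hrank : ∀ i, 1 ≤ i → i ≤ d + 1 → Module.finrank ℝ (flag i) = i - 1 := by
    intro i h1 h2
    have h3 := hchain (i - 1) 1 le_rfl (by omega)
    have h4 := hchain (d + 1 - i) i h1 (by omega)
    rw [show 1 + (i - 1) = i from by omega] at h3
    rw [show i + (d + 1 - i) = d + 1 from by omega, hrtop] at h4
    rw [hr1] at h3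
    omega
  have hsucc : ∀ i, 1 ≤ i → i ≤ d →
      Module.finrank ℝ (flag (i + 1)) = Module.finrank ℝ (flag i) + 1 := by
    intro i h1 h2
    rw [hrank (i + 1) (by omega) (by omega), hrank i h1 (by omega)]
    omega
  have hub : ∀ i, 1 ≤ i → i ≤ d → ∀ W : Submodule ℝ V,
      Module.finrank ℝ ↥(flag (i + 1) ⊓ W) ≤ Module.finrank ℝ ↥(flag i ⊓ W) + 1 := by
    intro i h1 h2 W
    have key := Submodule.finrank_sup_add_finrank_inf_eq (flag i) (flag (i + 1) ⊓ W)
    have h5 : flag i ⊓ (flag (i + 1) ⊓ W) = flag i ⊓ W := by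
      rw [← inf_assoc, inf_eq_left.mpr (hmono_flag i h1 h2)]
    have h6 : flag i ⊔ (flag (i + 1) ⊓ W) ≤ flag (i + 1) :=
      sup_le (hmono_flag i h1 h2) inf_le_left
    have h7 := Submodule.finrank_mono h6
    rw [h5] at key
    rw [hsucc i h1 h2] at h7
    omega
  have hlb : ∀ i, 1 ≤ i → i ≤ d → ∀ W : Submodule ℝ V,
      Module.finrank ℝ ↥(flag i ⊓ W) ≤ Module.finrank ℝ ↥(flag (i + 1) ⊓ W) :=
    fun i h1 h2 W => Submodule.finrank_mono (inf_le_inf_right W (hmono_flag i h1 h2))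
  have hind : ∀ i, 1 ≤ i → i ≤ d → ∀ W : Submodule ℝ V,
      (if Module.finrank ℝ ↥(flag (i + 1) ⊓ W) = Module.finrank ℝ ↥(flag i ⊓ W) + 1
        then α i else 0)
      = α i * ((Module.finrank ℝ ↥(flag (i + 1) ⊓ W) : ℝ)
          - (Module.finrank ℝ ↥(flag i ⊓ W) : ℝ)) := by
    intro i h1 h2 W
    by_cases h : Module.finrank ℝ ↥(flag (i + 1) ⊓ W) = Module.finrank ℝ ↥(flag i ⊓ W) + 1
    · rw [if_pos h, h]; push_cast; ring
    · rw [if_neg h]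
      have ha := hub i h1 h2 W
      have hb := hlb i h1 h2 W
      have heq : Module.finrank ℝ ↥(flag (i + 1) ⊓ W) = Module.finrank ℝ ↥(flag i ⊓ W) := by
        omega
      rw [heq]; ring
  have hf1 : ∀ W : Submodule ℝ V, Module.finrank ℝ ↥(flag 1 ⊓ W) = 0 := by
    intro W; rw [h_bot, bot_inf_eq]; exact finrank_bot ℝ V
  have hpart1 : ∀ W : Submodule ℝ V, ψ W = ∑ i ∈ Finset.Icc 1 d,
      (α i - α (i + 1)) * (Module.finrank ℝ ↥(flag (i + 1) ⊓ W) : ℝ) := by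
    intro W
    rw [hψ W]
    rw [Finset.sum_congr rfl (fun i hi => by
      obtain ⟨h1, h2⟩ := Finset.mem_Icc.mp hi
      exact hind i h1 h2 W)]
    set g : ℕ → ℝ := fun j => α j * (Module.finrank ℝ ↥(flag j ⊓ W) : ℝ) with hg
    have e1 : ∑ i ∈ Finset.Icc 1 d,
        (α i * ((Module.finrank ℝ ↥(flag (i + 1) ⊓ W) : ℝ)
            - (Module.finrank ℝ ↥(flag i ⊓ W) : ℝ))
          - (α i - α (i + 1)) * (Module.finrank ℝ ↥(flag (i + 1) ⊓ W) : ℝ))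
        = ∑ i ∈ Finset.Icc 1 d, (g (i + 1) - g i) := by
      refine Finset.sum_congr rfl fun i _ => ?_
      simp only [hg]; ring
    have e2 : ∑ i ∈ Finset.Icc 1 d, (g (i + 1) - g i) = 0 := by
      rw [← Finset.Ico_add_one_right_eq_Icc, Finset.sum_Ico_eq_sum_range]
      have e3 : ∀ j, g (1 + j + 1) - g (1 + j)
          = (fun k => g (1 + k)) (j + 1) - (fun k => g (1 + k)) j := by
        intro j
        simp only []
        rw [show 1 + j + 1 = 1 + (j + 1) from by omega]
      rw [Finset.sum_congr rfl fun j _ => e3 j]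
      rw [Finset.sum_range_sub (fun k => g (1 + k)) (d + 1 - 1)]
      simp only [hg]
      rw [show 1 + (d + 1 - 1) = d + 1 from by omega, hα_last, hf1 W]
      simp
    have := Finset.sum_sub_distrib (s := Finset.Icc 1 d)
      (f := fun i => α i * ((Module.finrank ℝ ↥(flag (i + 1) ⊓ W) : ℝ)
            - (Module.finrank ℝ ↥(flag i ⊓ W) : ℝ)))
      (g := fun i => (α i - α (i + 1)) * (Module.finrank ℝ ↥(flag (i + 1) ⊓ W) : ℝ))
    rw [e1, e2] at this
    linarith [this]
  have hαnn : ∀ i, 1 ≤ i → i ≤ d → 0 ≤ α i - α (i + 1) := by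
    intro i h1 h2
    rcases eq_or_lt_of_le h2 with h | h
    · rw [h, hα_last]
      have := hα_pos d (by omega) le_rfl
      linarith
    · linarith [hα_anti i h1 h]
  refine ⟨hpart1, ?_, ?_⟩
  · intro U W hUW
    rw [hpart1 U, hpart1 W]
    refine Finset.sum_le_sum fun i hi => ?_
    obtain ⟨h1, h2⟩ := Finset.mem_Icc.mp hi
    exact mul_le_mul_of_nonneg_left
      (Nat.cast_le.mpr (Submodule.finrank_mono (inf_le_inf_left _ hUW)))
      (hαnn i h1 h2)
  · intro U W
    have hsup : ∀ X U W : Submodule ℝ V,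
        Module.finrank ℝ ↥(X ⊓ U) + Module.finrank ℝ ↥(X ⊓ W)
          ≤ Module.finrank ℝ ↥(X ⊓ (U ⊔ W)) + Module.finrank ℝ ↥(X ⊓ (U ⊓ W)) := by
      intro X U W
      have key := Submodule.finrank_sup_add_finrank_inf_eq (X ⊓ U) (X ⊓ W)
      have h1 : (X ⊓ U) ⊓ (X ⊓ W) = X ⊓ (U ⊓ W) := (inf_inf_distrib_left X U W).symm
      have h2 : (X ⊓ U) ⊔ (X ⊓ W) ≤ X ⊓ (U ⊔ W) :=
        sup_le (inf_le_inf_left X le_sup_left) (inf_le_inf_left X le_sup_right)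
      have h3 := Submodule.finrank_mono h2
      rw [h1] at key
      omega
    rw [hpart1 U, hpart1 W, hpart1 (U ⊔ W), hpart1 (U ⊓ W),
      ← Finset.sum_add_distrib, ← Finset.sum_add_distrib]
    refine Finset.sum_le_sum fun i hi => ?_
    obtain ⟨h1, h2⟩ := Finset.mem_Icc.mp hi
    have hkey := hsup (flag (i + 1)) U W
    have hc := hαnn i h1 h2
    rw [← mul_add, ← mul_add]
    refine mul_le_mul_of_nonneg_left ?_ hc
    exact_mod_cast hkey
end

section
/- For any three subspaces U, W, X of a finite-dimensional vector space V, one has dim((U+W) ∩ X) + dim((U ∩ W) ∩ X) ≥ dim(U ∩ X) + dim(W ∩ X). In other words, the function W ↦ dim(W ∩ X) is supermodular on the lattice of subspaces. -/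
theorem inf_sup_inf_le_sup_inf {α : Type*} [Lattice α] (a b c : α) :
    a ⊓ c ⊔ b ⊓ c ≤ (a ⊔ b) ⊓ c :=
  sup_le (inf_le_inf_right c le_sup_left) (inf_le_inf_right c le_sup_right)

theorem Submodule.finrank_inf_add_finrank_inf_eq {K V : Type*} [DivisionRing K] [AddCommGroup V]
    [Module K V] [FiniteDimensional K V] (U W X : Submodule K V) :
    Module.finrank K ↥(U ⊓ X) + Module.finrank K ↥(W ⊓ X) =
      Module.finrank K ↥(U ⊓ X ⊔ W ⊓ X) + Module.finrank K ↥(U ⊓ W ⊓ X) := by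
  rw [inf_inf_distrib_right, Submodule.finrank_sup_add_finrank_inf_eq]

/-- For any three subspaces `U, W, X` of a finite-dimensional vector space,
`dim((U+W) ∩ X) + dim(U ∩ W ∩ X) ≥ dim(U ∩ X) + dim(W ∩ X)`:
the function `W ↦ dim(W ∩ X)` is supermodular on the lattice of subspaces. -/
theorem finrank_inf_supermodular
    {K V : Type*} [Field K] [AddCommGroup V] [Module K V] [FiniteDimensional K V]
    (U W X : Submodule K V) :
    Module.finrank K ↥(U ⊓ X) + Module.finrank K ↥(W ⊓ X) ≤
      Module.finrank K ↥((U ⊔ W) ⊓ X) + Module.finrank K ↥(U ⊓ W ⊓ X) := by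
  rw [Submodule.finrank_inf_add_finrank_inf_eq]
  exact Nat.add_le_add_right (Submodule.finrank_mono (inf_sup_inf_le_sup_inf U W X)) _
end

section
/- Let 𝔲_s be the Lie algebra of strictly upper triangular (s+1)×(s+1) real matrices, let e_i = E_{i,i+1} for 1 ≤ i ≤ s, and for each permutation σ of {1,…,s} fixing 1, let m_σ be the left-normed bracket m_σ(X_1,…,X_s) = [ … [[X_1, X_{σ(2)}], X_{σ(3)}], …, X_{σ(s)}]. Then for any two permutations σ, τ of {1,…,s} fixing 1, m_σ(e_1, e_{τ(2)}, …, e_{τ(s)}) equals E_{1,s+1} if σ = τ⁻¹ and 0 otherwise. Consequently, the family of multilinear bracket maps (m_σ)_σ is linearly independent as maps 𝔲_s^s → 𝔲_s. -/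
/-- A matrix is strictly upper triangular. -/
def IsStrictUpper {s : ℕ} (A : Matrix (Fin (s + 1)) (Fin (s + 1)) ℝ) : Prop :=
  ∀ i j : Fin (s + 1), (j : ℕ) ≤ (i : ℕ) → A i j = 0

/-- The elementary matrices `eᵢ = E_{i,i+1}`. -/
def elemUpper (s : ℕ) (i : Fin s) : Matrix (Fin (s + 1)) (Fin (s + 1)) ℝ :=
  Matrix.single i.castSucc i.succ 1

/-- The left-normed bracket `m_σ(X) = [⋯[[X_{σ(1)}, X_{σ(2)}], X_{σ(3)}], …, X_{σ(s)}]`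
(indices `0`-based, `σ` a permutation of `Fin s`). -/
def leftNormedBracket (s : ℕ) (hs : 0 < s)
    (X : Fin s → Matrix (Fin (s + 1)) (Fin (s + 1)) ℝ) (σ : Equiv.Perm (Fin s)) :
    Matrix (Fin (s + 1)) (Fin (s + 1)) ℝ :=
  ((List.finRange s).drop 1).foldl (fun acc j => ⁅acc, X (σ j)⁆) (X (σ ⟨0, hs⟩))

/-!
Since `e_a E_{1,m} = 0`, bracketing `E_{1,m}` with `e_a` is right multiplication by `e_a`: it gives
`E_{1,m+1}` if `a = m` and `0` otherwise. So the left-normed bracket of `e_1, e_{τσ(2)}, …, e_{τσ(s)}`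
walks the entry of `e_1 = E_{1,2}` along the first row to `E_{1,s+1}` exactly when `τσ = 1`, and is
`0` otherwise. Evaluating a relation `∑ c_σ m_σ = 0` at `(e_{τ(i)})_i` with `τ = σ₀⁻¹` isolates `c_{σ₀}`.
-/

theorem LinearIndependent.of_apply_eq_ite {ι α R M : Type*} [Ring R] [IsDomain R]
    [AddCommGroup M] [Module R M] [Module.IsTorsionFree R M] [DecidableEq ι]
    {f : ι → α → M} (x : ι → α) {v : M} (hv : v ≠ 0)
    (hf : ∀ i j, f j (x i) = if i = j then v else 0) :
    LinearIndependent R f := by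
  let evalAt : (α → M) →ₗ[R] (ι → M) := LinearMap.pi fun i => LinearMap.proj (x i)
  have hcomp : evalAt ∘ f = fun j => Pi.single j v := by
    ext j i
    simp [evalAt, hf, Pi.single_apply]
  refine LinearIndependent.of_comp evalAt ?_
  rw [hcomp]
  exact Pi.linearIndependent_single_of_ne_zero fun _ => hv

theorem List.foldl_lie_zero {ι A : Type*} [Ring A] (f : ι → A) (l : List ι) :
    l.foldl (fun acc j => ⁅acc, f j⁆) 0 = 0 := by
  induction l with
  | nil => rfl
  | cons a l ih => simpa [Ring.lie_def] using ih

theorem Matrix.lie_single_single_of_ne {n α : Type*} [Fintype n] [DecidableEq n] [Ring α]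
    {i j k l : n} (h : l ≠ i) (c d : α) :
    ⁅Matrix.single i j c, Matrix.single k l d⁆ =
      if j = k then Matrix.single i l (c * d) else 0 := by
  rw [Ring.lie_def, Matrix.single_mul_single_of_ne (c := d) k l i h, sub_zero]
  split_ifs with hjk
  · rw [hjk, Matrix.single_mul_single_same]
  · exact Matrix.single_mul_single_of_ne (c := c) i j k hjk d

section

variable {s : ℕ}

theorem elemUpper_isStrictUpper (i : Fin s) : IsStrictUpper (elemUpper s i) := by
  intro a b hab
  simp only [elemUpper, Matrix.single, Matrix.of_apply, ite_eq_right_iff, one_ne_zero]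
  rintro ⟨rfl, rfl⟩
  simp at hab

theorem lie_single_zero_elemUpper (m : Fin (s + 1)) (a : Fin s) :
    ⁅Matrix.single (0 : Fin (s + 1)) m (1 : ℝ), elemUpper s a⁆ =
      if m = a.castSucc then Matrix.single 0 a.succ 1 else 0 := by
  rw [elemUpper, Matrix.lie_single_single_of_ne (Fin.succ_ne_zero a), mul_one]

theorem foldl_lie_elemUpper_drop (π : Equiv.Perm (Fin s)) (k : ℕ) (hk : k ≤ s) :
    ((List.finRange s).drop k).foldl (fun acc j => ⁅acc, elemUpper s (π j)⁆)
        (Matrix.single 0 ⟨k, by omega⟩ 1) =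
      if ∀ j : Fin s, k ≤ j → π j = j then Matrix.single 0 (Fin.last s) 1 else 0 := by
  induction hn : s - k generalizing k with
  | zero =>
    obtain rfl : k = s := by omega
    have hfix : ∀ j : Fin k, k ≤ j → π j = j := fun j hj => absurd j.2 (by omega)
    rw [List.drop_eq_nil_of_le (by simp), if_pos hfix]
    rfl
  | succ n ih =>
    have hk' : k < s := by omega
    have hdrop : (List.finRange s).drop k = ⟨k, hk'⟩ :: (List.finRange s).drop (k + 1) := by
      simp [List.drop_eq_getElem_cons (l := List.finRange s) (by simpa using hk')]
    rw [hdrop, List.foldl_cons, lie_single_zero_elemUpper]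
    by_cases hπ : π ⟨k, hk'⟩ = ⟨k, hk'⟩
    · have hcol : (⟨k, by omega⟩ : Fin (s + 1)) = (π ⟨k, hk'⟩).castSucc := by rw [hπ]; rfl
      have hfix : (∀ j : Fin s, k + 1 ≤ j → π j = j) ↔ ∀ j : Fin s, k ≤ j → π j = j := by
        refine ⟨fun hall j hj => ?_, fun hall j hj => hall j (by omega)⟩
        rcases hj.eq_or_lt with hjk | hjk
        · rwa [show j = ⟨k, hk'⟩ from Fin.ext hjk.symm]
        · exact hall j hjk
      rw [if_pos hcol, hπ]
      exact (ih (k + 1) (by omega) (by omega)).trans (if_congr hfix rfl rfl)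
    · have hcol : (⟨k, by omega⟩ : Fin (s + 1)) ≠ (π ⟨k, hk'⟩).castSucc := fun h =>
        hπ (Fin.castSucc_inj.mp h.symm)
      have hfix : ¬ ∀ j : Fin s, k ≤ j → π j = j := fun hall => hπ (hall _ le_rfl)
      rw [if_neg hcol, if_neg hfix]
      exact List.foldl_lie_zero (fun j => elemUpper s (π j)) _

theorem leftNormedBracket_elemUpper (hs : 0 < s) {σ τ : Equiv.Perm (Fin s)}
    (hσ : σ ⟨0, hs⟩ = ⟨0, hs⟩) (hτ : τ ⟨0, hs⟩ = ⟨0, hs⟩) :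
    leftNormedBracket s hs (fun i => elemUpper s (τ i)) σ =
      if σ = τ⁻¹ then Matrix.single 0 (Fin.last s) 1 else 0 := by
  have hstart : elemUpper s (τ (σ ⟨0, hs⟩)) = Matrix.single 0 ⟨1, by omega⟩ 1 := by
    rw [hσ, hτ]
    rfl
  have hfix : (∀ j : Fin s, 1 ≤ (j : ℕ) → (τ * σ) j = j) ↔ σ = τ⁻¹ := by
    rw [← mul_eq_one_iff_eq_inv', Equiv.Perm.ext_iff]
    refine ⟨fun hall j => ?_, fun hall j _ => hall j⟩
    rcases Nat.eq_zero_or_pos j with hj | hj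
    · rw [show j = ⟨0, hs⟩ from Fin.ext hj]
      simp [hσ, hτ]
    · exact hall j hj
  simp only [leftNormedBracket]
  rw [hstart]
  exact (foldl_lie_elemUpper_drop (τ * σ) 1 hs).trans (if_congr hfix rfl rfl)

end

/-- For permutations `σ, τ` of `{1,…,s}` fixing the first index,
`m_σ(e₁, e_{τ(2)}, …, e_{τ(s)})` equals `E_{1,s+1}` if `σ = τ⁻¹` and `0` otherwise;
consequently the family of multilinear bracket maps `(m_σ)_σ` is linearly independent as
maps `𝔲_s^s → 𝔲_s`. -/
theorem leftNormed_eval_duality (s : ℕ) (hs : 0 < s) :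
    (∀ σ τ : Equiv.Perm (Fin s), σ ⟨0, hs⟩ = ⟨0, hs⟩ → τ ⟨0, hs⟩ = ⟨0, hs⟩ →
      leftNormedBracket s hs (fun i => elemUpper s (τ i)) σ =
        (if σ = τ⁻¹ then Matrix.single 0 (Fin.last s) 1 else 0)) ∧
    LinearIndependent ℝ
      (fun (σ : {σ : Equiv.Perm (Fin s) // σ ⟨0, hs⟩ = ⟨0, hs⟩}) =>
        (fun X : {X : Fin s → Matrix (Fin (s + 1)) (Fin (s + 1)) ℝ //
            ∀ i, IsStrictUpper (X i)} =>
          leftNormedBracket s hs X.1 σ.1)) := by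
  refine ⟨fun σ τ hσ hτ => leftNormedBracket_elemUpper hs hσ hτ, ?_⟩
  refine LinearIndependent.of_apply_eq_ite (v := Matrix.single 0 (Fin.last s) 1)
    (fun τ => ⟨fun i => elemUpper s (τ.1⁻¹ i), fun i => elemUpper_isStrictUpper _⟩)
    (fun h => by simpa using congr_fun₂ h 0 (Fin.last s)) fun τ σ => ?_
  have hτ : τ.1⁻¹ ⟨0, hs⟩ = ⟨0, hs⟩ := Equiv.Perm.inv_eq_iff_eq.mpr τ.2.symm
  simp only [leftNormedBracket_elemUpper hs σ.2 hτ, inv_inv, Subtype.ext_iff, eq_comm]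
end

section
/- Let μ and λ be Young diagrams (partitions) with the same number of boxes and at most d rows, and suppose μ is obtained from λ by moving one box downwards: μ_i = λ_i for all i except μ_r = λ_r − 1 and μ_t = λ_t + 1 for some indices r < t. Let d_λ(k) = Π_{1 ≤ i < j ≤ k} (λ_i − λ_j + j − i)/(j − i) be the Weyl dimension of the irreducible GL_k-representation with highest weight λ (padding λ with zeros to length k). Then for every k ≥ d: d_μ(k)/d_μ(d) ≥ d_λ(k)/d_λ(d). -/
/-- The Weyl dimension `d_λ(k) = ∏_{0 ≤ i < j < k} (λᵢ − λⱼ + j − i)/(j − i)` of the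
irreducible `GL_k`-representation with highest weight the partition `λ` (written
`0`-based and padded with zeros). -/
noncomputable def weylDim (lam : ℕ → ℕ) (k : ℕ) : ℝ :=
  ∏ p ∈ (Finset.range k ×ˢ Finset.range k).filter (fun p => p.1 < p.2),
    (((lam p.1 : ℝ) - (lam p.2 : ℝ) + (p.2 : ℝ) - (p.1 : ℝ)) / ((p.2 : ℝ) - (p.1 : ℝ)))

/-- The per-pair factor of the Weyl dimension formula. -/
noncomputable def wFac (l : ℕ → ℕ) (i j : ℕ) : ℝ :=
  ((l i : ℝ) - (l j : ℝ) + (j : ℝ) - (i : ℝ)) / ((j : ℝ) - (i : ℝ))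

lemma wFac_pos (l : ℕ → ℕ) (hanti : ∀ i j : ℕ, i ≤ j → l j ≤ l i)
    {i j : ℕ} (hij : i < j) : 0 < wFac l i j := by
  have h1 : (l j : ℝ) ≤ l i := by exact_mod_cast hanti i j hij.le
  have h2 : (i : ℝ) < j := by exact_mod_cast hij
  apply div_pos <;> linarith

lemma prod_pairs (g : ℕ × ℕ → ℝ) (k : ℕ) :
    ∏ p ∈ (Finset.range k ×ˢ Finset.range k).filter (fun p => p.1 < p.2), g p
      = ∏ j ∈ Finset.range k, ∏ i ∈ Finset.range j, g (i, j) := by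
  induction k with
  | zero => simp
  | succ n ih =>
    have hset : (Finset.range (n+1) ×ˢ Finset.range (n+1)).filter (fun p => p.1 < p.2)
        = (Finset.range n ×ˢ Finset.range n).filter (fun p => p.1 < p.2)
          ∪ (Finset.range n).image (fun i => (i, n)) := by
      ext ⟨a, b⟩
      simp only [Finset.mem_filter, Finset.mem_product, Finset.mem_range,
        Finset.mem_union, Finset.mem_image, Prod.mk.injEq]
      constructor
      · rintro ⟨⟨ha, hb⟩, hab⟩
        rcases Nat.lt_succ_iff_lt_or_eq.mp hb with hb' | hb'
        · exact Or.inl ⟨⟨by omega, hb'⟩, hab⟩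
        · exact Or.inr ⟨a, by omega, rfl, hb'.symm⟩
      · rintro (⟨⟨ha, hb⟩, hab⟩ | ⟨i, hi, rfl, rfl⟩)
        · exact ⟨⟨by omega, by omega⟩, hab⟩
        · exact ⟨⟨by omega, by omega⟩, hi⟩
    have hdisj : Disjoint ((Finset.range n ×ˢ Finset.range n).filter (fun p => p.1 < p.2))
        ((Finset.range n).image (fun i => (i, n))) := by
      rw [Finset.disjoint_left]
      rintro ⟨a, b⟩ h1 h2
      simp only [Finset.mem_filter, Finset.mem_product, Finset.mem_range] at h1
      simp only [Finset.mem_image, Prod.mk.injEq] at h2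
      obtain ⟨i, hi, rfl, rfl⟩ := h2
      omega
    rw [hset, Finset.prod_union hdisj, ih, Finset.prod_range_succ]
    congr 1
    rw [Finset.prod_image]
    intro x _ y _ h
    simpa using h

lemma weylDim_eq (l : ℕ → ℕ) (k : ℕ) :
    weylDim l k = ∏ j ∈ Finset.range k, ∏ i ∈ Finset.range j, wFac l i j :=
  prod_pairs _ k

/-- If the partition `μ` (at most `d` rows, same number of boxes) is obtained from the
partition `λ` by moving one box downwards, from row `r` to row `t` with `r < t`, then for
every `k ≥ d`: `d_μ(k)/d_μ(d) ≥ d_λ(k)/d_λ(d)`. -/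
theorem weylDim_ratio_monotone_under_box_move
    (d r t : ℕ) (lam mu : ℕ → ℕ)
    (hlam_anti : ∀ i j : ℕ, i ≤ j → lam j ≤ lam i)
    (hlam_rows : ∀ i : ℕ, d ≤ i → lam i = 0)
    (hmu_anti : ∀ i j : ℕ, i ≤ j → mu j ≤ mu i)
    (hmu_rows : ∀ i : ℕ, d ≤ i → mu i = 0)
    (hrt : r < t) (htd : t < d)
    (hlam_r : 1 ≤ lam r)
    (hmu_r : mu r = lam r - 1) (hmu_t : mu t = lam t + 1)
    (hmu_other : ∀ i : ℕ, i ≠ r → i ≠ t → mu i = lam i)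
    (k : ℕ) (hk : d ≤ k) :
    weylDim lam k / weylDim lam d ≤ weylDim mu k / weylDim mu d := by
  have hPpos : ∀ (l : ℕ → ℕ), (∀ i j : ℕ, i ≤ j → l j ≤ l i) → ∀ j,
      0 < ∏ i ∈ Finset.range j, wFac l i j := fun l hanti j =>
    Finset.prod_pos fun i hi => wFac_pos l hanti (Finset.mem_range.mp hi)
  have hsplit : ∀ (l : ℕ → ℕ), (∀ i j : ℕ, i ≤ j → l j ≤ l i) →
      weylDim l k / weylDim l d
        = ∏ j ∈ Finset.Ico d k, ∏ i ∈ Finset.range j, wFac l i j := by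
    intro l hanti
    rw [weylDim_eq, weylDim_eq,
      ← Finset.prod_range_mul_prod_Ico (fun j => ∏ i ∈ Finset.range j, wFac l i j) hk]
    rw [mul_comm, mul_div_assoc, div_self (ne_of_gt ?_), mul_one]
    exact Finset.prod_pos fun j _ => hPpos l hanti j
  rw [hsplit lam hlam_anti, hsplit mu hmu_anti]
  apply Finset.prod_le_prod
  · intro j _
    exact (hPpos lam hlam_anti j).le
  · intro j hj
    have hdj : d ≤ j := (Finset.mem_Ico.mp hj).1
    have hrj : r ∈ Finset.range j := Finset.mem_range.mpr (by omega)
    have htj : t ∈ (Finset.range j).erase r :=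
      Finset.mem_erase.mpr ⟨by omega, Finset.mem_range.mpr (by omega)⟩
    have expand : ∀ (l : ℕ → ℕ), ∏ i ∈ Finset.range j, wFac l i j
        = wFac l r j * (wFac l t j *
          ∏ i ∈ ((Finset.range j).erase r).erase t, wFac l i j) := by
      intro l
      rw [← Finset.mul_prod_erase _ _ hrj, ← Finset.mul_prod_erase _ _ htj]
    rw [expand lam, expand mu]
    have hCeq : ∏ i ∈ ((Finset.range j).erase r).erase t, wFac mu i j
        = ∏ i ∈ ((Finset.range j).erase r).erase t, wFac lam i j := by
      apply Finset.prod_congr rfl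
      intro i hi
      have hit : i ≠ t := (Finset.mem_erase.mp hi).1
      have hir : i ≠ r := (Finset.mem_erase.mp (Finset.mem_erase.mp hi).2).1
      unfold wFac
      rw [hmu_other i hir hit, hmu_rows j hdj, hlam_rows j hdj]
    rw [hCeq, ← mul_assoc, ← mul_assoc]
    have hC : 0 ≤ ∏ i ∈ ((Finset.range j).erase r).erase t, wFac lam i j := by
      apply Finset.prod_nonneg
      intro i hi
      have := Finset.mem_range.mp (Finset.mem_erase.mp (Finset.mem_erase.mp hi).2).2
      exact (wFac_pos lam hlam_anti this).le
    apply mul_le_mul_of_nonneg_right _ hC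
    -- the key two-factor inequality
    have hljz : lam j = 0 := hlam_rows j hdj
    have hmjz : mu j = 0 := hmu_rows j hdj
    have hcast_r : (mu r : ℝ) = (lam r : ℝ) - 1 := by
      rw [hmu_r]; push_cast [hlam_r]; ring
    have hcast_t : (mu t : ℝ) = (lam t : ℝ) + 1 := by
      rw [hmu_t]; push_cast; ring
    unfold wFac
    rw [hljz, hmjz, hcast_r, hcast_t]
    have hab : (lam t : ℝ) ≤ (lam r : ℝ) := by exact_mod_cast hlam_anti r t hrt.le
    have hRT : (r : ℝ) + 1 ≤ t := by exact_mod_cast hrt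
    have hTJ : (t : ℝ) + 1 ≤ j := by exact_mod_cast (by omega : t + 1 ≤ j)
    have hdR : (0:ℝ) < (j : ℝ) - r := by linarith
    have hdT : (0:ℝ) < (j : ℝ) - t := by linarith
    have ha1 : (1:ℝ) ≤ (lam r : ℝ) := by exact_mod_cast hlam_r
    rw [div_mul_div_comm, div_mul_div_comm,
      div_le_div_iff₀ (by positivity) (by positivity)]
    push_cast
    nlinarith [mul_pos hdR hdT]
end

section
/- Let V be a d-dimensional real vector space with full flag 0 = V_1 < … < V_d < V_{d+1} = V and weights α_1 ≥ … ≥ α_d > 0 defining ψ as before, and suppose W ≤ V and W' is an adapted complement, i.e. (W ∩ V_i) ⊕ (W' ∩ V_i) = V_i for every i. Then the jump sets satisfy I(W') = {1,…,d} ∖ I(W), and consequently ψ(W') = ψ(V) − ψ(W). -/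
-- general estimate: for B ≤ A, finrank(A ⊓ S) + finrank B ≤ finrank A + finrank(B ⊓ S)
lemma aux_inf_rank {V : Type*} [AddCommGroup V] [Module ℝ V] [FiniteDimensional ℝ V]
    {A B S : Submodule ℝ V} (hBA : B ≤ A) :
    Module.finrank ℝ ↥(A ⊓ S) + Module.finrank ℝ ↥B
      ≤ Module.finrank ℝ ↥A + Module.finrank ℝ ↥(B ⊓ S) := by
  have h1 := Submodule.finrank_sup_add_finrank_inf_eq B (A ⊓ S)
  have h3 : B ⊓ (A ⊓ S) = B ⊓ S := by
    rw [← inf_assoc, inf_eq_left.mpr hBA]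
  have h2 : Module.finrank ℝ ↥(B ⊔ (A ⊓ S)) ≤ Module.finrank ℝ ↥A :=
    Submodule.finrank_mono (sup_le hBA inf_le_left)
  rw [h3] at h1
  omega

/-- With a full flag `0 = V₁ < … < V_d < V_{d+1} = V` and weights `α₁ ≥ … ≥ α_d > 0`
(`α_{d+1} = 0`) defining `ψ(W) = ∑_{i ∈ I(W)} αᵢ`, if `W'` is an adapted complement of `W`,
i.e. `(W ∩ Vᵢ) ⊕ (W' ∩ Vᵢ) = Vᵢ` for every `i`, then the jump sets satisfy
`I(W') = {1,…,d} ∖ I(W)`, and consequently `ψ(W') = ψ(V) − ψ(W)`. -/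
theorem adapted_complement_jump_sets
    {V : Type*} [AddCommGroup V] [Module ℝ V] [FiniteDimensional ℝ V]
    (d : ℕ) (hd : Module.finrank ℝ V = d)
    (flag : ℕ → Submodule ℝ V)
    (h_bot : flag 1 = ⊥) (h_top : flag (d + 1) = ⊤)
    (h_lt : ∀ i, 1 ≤ i → i ≤ d → flag i < flag (i + 1))
    (α : ℕ → ℝ)
    (hα_pos : ∀ i, 1 ≤ i → i ≤ d → 0 < α i)
    (hα_anti : ∀ i, 1 ≤ i → i < d → α (i + 1) ≤ α i)
    (hα_last : α (d + 1) = 0)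
    (ψ : Submodule ℝ V → ℝ)
    (hψ : ∀ W : Submodule ℝ V, ψ W = ∑ i ∈ Finset.Icc 1 d,
      (if Module.finrank ℝ ↥(flag (i + 1) ⊓ W) = Module.finrank ℝ ↥(flag i ⊓ W) + 1
        then α i else 0))
    (W W' : Submodule ℝ V)
    (h_adapted : ∀ i, 1 ≤ i → i ≤ d + 1 →
      ((W ⊓ flag i) ⊓ (W' ⊓ flag i) = ⊥ ∧ (W ⊓ flag i) ⊔ (W' ⊓ flag i) = flag i)) :
    ((Finset.Icc 1 d).filter (fun i =>
        Module.finrank ℝ ↥(flag (i + 1) ⊓ W') = Module.finrank ℝ ↥(flag i ⊓ W') + 1)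
      = Finset.Icc 1 d \ (Finset.Icc 1 d).filter (fun i =>
        Module.finrank ℝ ↥(flag (i + 1) ⊓ W) = Module.finrank ℝ ↥(flag i ⊓ W) + 1)) ∧
    ψ W' = ψ ⊤ - ψ W := by
  set F : ℕ → ℕ := fun i => Module.finrank ℝ ↥(flag i) with hF
  -- lower bound F i ≥ i - 1
  have hlow : ∀ i, 1 ≤ i → i ≤ d + 1 → i - 1 ≤ F i := by
    intro i
    induction i with
    | zero => omega
    | succ n ih =>
      intro _ hn
      rcases Nat.eq_or_lt_of_le (show 1 ≤ n + 1 from by omega) with h | h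
      · omega
      · have hn1 : 1 ≤ n := by omega
        have := h_lt n hn1 (by omega)
        have hlt : F n < F (n + 1) := Submodule.finrank_lt_finrank_of_lt this
        have := ih hn1 (by omega)
        omega
  have hFtop : F (d + 1) = d := by
    show Module.finrank ℝ ↥(flag (d+1)) = d
    rw [h_top, finrank_top, hd]
  -- upper bound via downward induction
  have hupk : ∀ k, k ≤ d → F (d + 1 - k) + k ≤ d := by
    intro k
    induction k with
    | zero => simp [hFtop]
    | succ n ih =>
      intro hn
      have h1 : 1 ≤ d - n := by omega
      have h2 : d - n ≤ d := by omega
      have hlt : F (d - n) < F (d - n + 1) :=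
        Submodule.finrank_lt_finrank_of_lt (h_lt _ h1 h2)
      have he : d + 1 - n = d - n + 1 := by omega
      have := ih (by omega)
      rw [he] at this
      have he2 : d + 1 - (n + 1) = d - n := by omega
      rw [he2]
      omega
  have hFval : ∀ i, 1 ≤ i → i ≤ d + 1 → F i = i - 1 := by
    intro i h1 h2
    have := hupk (d + 1 - i) (by omega)
    have he : d + 1 - (d + 1 - i) = i := by omega
    rw [he] at this
    have := hlow i h1 h2
    omega
  -- adapted sum
  have hsum : ∀ i, 1 ≤ i → i ≤ d + 1 →
      Module.finrank ℝ ↥(flag i ⊓ W) + Module.finrank ℝ ↥(flag i ⊓ W') = i - 1 := by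
    intro i h1 h2
    obtain ⟨e1, e2⟩ := h_adapted i h1 h2
    have h := Submodule.finrank_sup_add_finrank_inf_eq (W ⊓ flag i) (W' ⊓ flag i)
    rw [e1, e2, finrank_bot] at h
    have e := hFval i h1 h2
    simp only [hF] at e
    rw [inf_comm (flag i) W, inf_comm (flag i) W']
    omega
  -- monotonicity and ≤ +1 for both subspaces
  have key : ∀ S : Submodule ℝ V, ∀ i, 1 ≤ i → i ≤ d →
      Module.finrank ℝ ↥(flag i ⊓ S) ≤ Module.finrank ℝ ↥(flag (i + 1) ⊓ S) ∧
      Module.finrank ℝ ↥(flag (i + 1) ⊓ S) ≤ Module.finrank ℝ ↥(flag i ⊓ S) + 1 := by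
    intro S i h1 h2
    have hle : flag i ≤ flag (i + 1) := le_of_lt (h_lt i h1 h2)
    constructor
    · exact Submodule.finrank_mono (inf_le_inf_right S hle)
    · have := aux_inf_rank (S := S) hle
      have e1 : F i = i - 1 := hFval i h1 (by omega)
      have e2 : F (i + 1) = i := by have := hFval (i+1) (by omega) (by omega); omega
      simp only [hF] at e1 e2
      omega
  -- the pointwise iff
  have hiff : ∀ i, 1 ≤ i → i ≤ d →
      ((Module.finrank ℝ ↥(flag (i + 1) ⊓ W') = Module.finrank ℝ ↥(flag i ⊓ W') + 1)
        ↔ ¬ (Module.finrank ℝ ↥(flag (i + 1) ⊓ W) = Module.finrank ℝ ↥(flag i ⊓ W) + 1)) := by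
    intro i h1 h2
    have k1 := key W i h1 h2
    have k2 := key W' i h1 h2
    have s1 := hsum i h1 (by omega)
    have s2 := hsum (i + 1) (by omega) (by omega)
    constructor <;> intro h <;> omega
  have hset : ((Finset.Icc 1 d).filter (fun i =>
        Module.finrank ℝ ↥(flag (i + 1) ⊓ W') = Module.finrank ℝ ↥(flag i ⊓ W') + 1)
      = Finset.Icc 1 d \ (Finset.Icc 1 d).filter (fun i =>
        Module.finrank ℝ ↥(flag (i + 1) ⊓ W) = Module.finrank ℝ ↥(flag i ⊓ W) + 1)) := by
    ext i
    simp only [Finset.mem_filter, Finset.mem_sdiff, Finset.mem_Icc, not_and]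
    constructor
    · rintro ⟨⟨h1, h2⟩, h3⟩
      exact ⟨⟨h1, h2⟩, fun _ => (hiff i h1 h2).mp h3⟩
    · rintro ⟨⟨h1, h2⟩, h3⟩
      exact ⟨⟨h1, h2⟩, (hiff i h1 h2).mpr (h3 ⟨h1, h2⟩)⟩
  refine ⟨hset, ?_⟩
  have htop_cond : ∀ i ∈ Finset.Icc 1 d,
      Module.finrank ℝ ↥(flag (i + 1) ⊓ (⊤ : Submodule ℝ V))
        = Module.finrank ℝ ↥(flag i ⊓ (⊤ : Submodule ℝ V)) + 1 := by
    intro i hi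
    rw [Finset.mem_Icc] at hi
    rw [show flag (i+1) ⊓ (⊤ : Submodule ℝ V) = flag (i+1) from inf_top_eq _, show flag i ⊓ (⊤ : Submodule ℝ V) = flag i from inf_top_eq _]
    have e1 := hFval i hi.1 (by omega)
    have e2 := hFval (i + 1) (by omega) (by omega)
    simp only [hF] at e1 e2
    omega
  rw [hψ W', hψ ⊤, hψ W, ← Finset.sum_sub_distrib]
  apply Finset.sum_congr rfl
  intro i hi
  rw [Finset.mem_Icc] at hi
  rw [if_pos (htop_cond i (Finset.mem_Icc.mpr hi))]
  by_cases h : Module.finrank ℝ ↥(flag (i + 1) ⊓ W) = Module.finrank ℝ ↥(flag i ⊓ W) + 1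
  · rw [if_pos h, if_neg (by rw [hiff i hi.1 hi.2]; exact not_not.mpr h)]
    ring
  · rw [if_neg h, if_pos ((hiff i hi.1 hi.2).mpr h)]
    ring
end
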